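/- arXiv:2008.06769 — 8 statements merged into one kernel-verified Lean document; each statement's English description precedes it below -/
import Mathlib

section
/- Let H be an infinite-dimensional complex Hilbert space. Then for every bounded linear operator T on H, the distance from T to the closed unit ball of the space of compact operators satisfies d(T, B_{K(H)}) = max{‖T‖ − 1, d(T, K(H))}. -/
/-!
Fix `c > max (‖T‖ - 1) d(T, K(H))` and a compact `C` with `‖T - C‖ < c`. For
`g t = min 1 (c / √t)`, functional calculus gives `‖T g(T⋆T)‖ ≤ c` and
`‖T (1 - g(T⋆T))‖ ≤ 1`, so it suffices that `1 - g(T⋆T)` is compact. Now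
`T⋆T - (T - C)⋆(T - C)` is compact because the compact operators form a closed two-sided ideal
that is closed under adjoints (Schauder), and `g = 1` on the spectrum of `(T - C)⋆(T - C)`, which
lies below `c²`. Since `g` is a uniform limit of polynomials on the spectra,
`g(T⋆T) - g((T - C)⋆(T - C)) = g(T⋆T) - 1` is compact as well. The argument works verbatim for
any closed `⋆`-closed ideal of a unital C⋆-algebra.
-/

open Polynomial Metric Set

theorem TwoSidedIdeal.aeval_sub_aeval_mem {R A : Type*} [CommRing R] [Ring A] [Algebra R A]
    (I : TwoSidedIdeal A) {a b : A} (hab : a - b ∈ I) (p : R[X]) :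
    aeval a p - aeval b p ∈ I := by
  rw [← I.rel_iff, ← RingCon.eq] at hab
  rw [← I.rel_iff, ← RingCon.eq]
  have hmk := aeval_algHom_apply (I.ringCon.mkₐ (α := R))
  exact (hmk a p).symm.trans ((congrArg (aeval · p) hab).trans (hmk b p))

theorem totallyBounded_image_of_forall_dist_lt {α β γ : Type*} [PseudoMetricSpace β]
    [PseudoMetricSpace γ] {f : α → β} {g : α → γ} {s : Set α}
    (hf : TotallyBounded (f '' s))
    (h : ∀ ε > 0, ∃ δ > 0, ∀ x ∈ s, ∀ y ∈ s,
      dist (f x) (f y) < δ → dist (g x) (g y) < ε) :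
    TotallyBounded (g '' s) := by
  refine Metric.totallyBounded_iff.mpr fun ε hε => ?_
  obtain ⟨δ, hδ, hfg⟩ := h ε hε
  obtain ⟨t, hts, htfin, hcov⟩ := finite_approx_of_totallyBounded hf δ hδ
  obtain ⟨u, hus, hufin, rfl⟩ := htfin.exists_subset_finite_image_eq hts
  refine ⟨g '' u, hufin.image g, ?_⟩
  rintro _ ⟨x, hx, rfl⟩
  obtain ⟨_, ⟨y, hy, rfl⟩, hxy⟩ := mem_iUnion₂.mp (hcov ⟨x, hx, rfl⟩)
  exact mem_iUnion₂.mpr ⟨g y, mem_image_of_mem g hy, hfg x hx y (hus hy) hxy⟩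

/-- `min 1 (c / √t)` for `c > 0`, written with `max` so that it stays continuous at `t = 0`
(where `c / √0 = 0` in Lean). -/
noncomputable def sqrtCutoff (c t : ℝ) : ℝ := c / max √t c

theorem continuous_sqrtCutoff {c : ℝ} (hc : 0 < c) : Continuous (sqrtCutoff c) :=
  continuous_const.div (Real.continuous_sqrt.max continuous_const) fun _ =>
    (hc.trans_le (le_max_right _ _)).ne'

theorem sqrtCutoff_of_le_sq {c t : ℝ} (hc : 0 < c) (ht : t ≤ c ^ 2) : sqrtCutoff c t = 1 := by
  have : √t ≤ c := Real.sqrt_le_iff.mpr ⟨hc.le, ht⟩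
  rw [sqrtCutoff, max_eq_right this, div_self hc.ne']

theorem mul_sqrtCutoff_sq_le {c t : ℝ} (hc : 0 < c) (ht : 0 ≤ t) :
    t * sqrtCutoff c t ^ 2 ≤ c ^ 2 := by
  have hm : 0 < max √t c := hc.trans_le (le_max_right _ _)
  have : √t * sqrtCutoff c t ≤ c := by
    rw [sqrtCutoff, mul_div_assoc', div_le_iff₀ hm, mul_comm]
    exact mul_le_mul_of_nonneg_left (le_max_left _ _) hc.le
  calc t * sqrtCutoff c t ^ 2 = (√t * sqrtCutoff c t) ^ 2 := by
        rw [mul_pow, Real.sq_sqrt ht]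
    _ ≤ c ^ 2 := pow_le_pow_left₀ (by unfold sqrtCutoff; positivity) this 2

theorem mul_one_sub_sqrtCutoff_sq_le {c t : ℝ} (hc : 0 < c) (ht : 0 ≤ t)
    (htc : t ≤ (c + 1) ^ 2) :
    t * (1 - sqrtCutoff c t) ^ 2 ≤ 1 := by
  rcases le_total t (c ^ 2) with h | h
  · simp [sqrtCutoff_of_le_sq hc h]
  · have hs : c ≤ √t := Real.le_sqrt_of_sq_le h
    have hs1 : √t ≤ c + 1 := Real.sqrt_le_iff.mpr ⟨by linarith, htc⟩
    have hs0 : 0 < √t := hc.trans_le hs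
    calc t * (1 - sqrtCutoff c t) ^ 2 = (√t - c) ^ 2 := by
          rw [sqrtCutoff, max_eq_left hs]
          field_simp
          rw [Real.sq_sqrt ht]
      _ ≤ 1 := by nlinarith

section CStarAlgebra

variable {A : Type*} [CStarAlgebra A]

theorem norm_cfc_sub_aeval_le {a : A} (ha : IsSelfAdjoint a) {f : ℝ → ℝ} (hf : Continuous f)
    {p : ℝ[X]} {ε : ℝ} (hε : 0 ≤ ε)
    (hp : ∀ t ∈ spectrum ℝ a, |p.eval t - f t| ≤ ε) :
    ‖cfc f a - aeval a p‖ ≤ ε := by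
  rw [← cfc_polynomial p a, ← cfc_sub f p.eval a]
  exact norm_cfc_le hε fun t ht => by rw [Real.norm_eq_abs, abs_sub_comm]; exact hp t ht

theorem spectrum_star_mul_self_subset_Icc (a : A) :
    spectrum ℝ (star a * a) ⊆ Icc 0 (‖a‖ ^ 2) := by
  intro t ht
  cases subsingleton_or_nontrivial A
  · simp [spectrum.of_subsingleton] at ht
  refine ⟨spectrum_star_mul_self_nonneg t ht, ?_⟩
  calc t ≤ ‖t‖ := Real.le_norm_self t
    _ ≤ ‖star a * a‖ := spectrum.norm_le_norm_of_mem ht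
    _ = ‖a‖ ^ 2 := by rw [CStarRing.norm_star_mul_self, sq]

theorem norm_mul_cfc_star_mul_self_le (a : A) {h : ℝ → ℝ} (hh : Continuous h) {C : ℝ}
    (hC : 0 ≤ C) (hbound : ∀ t ∈ Icc 0 (‖a‖ ^ 2), t * h t ^ 2 ≤ C ^ 2) :
    ‖a * cfc h (star a * a)‖ ≤ C := by
  set x := star a * a
  have hsa : IsSelfAdjoint (cfc h x) := cfc_predicate h x
  have hsq : star (a * cfc h x) * (a * cfc h x) = cfc (fun t => t * h t ^ 2) x := by
    calc star (a * cfc h x) * (a * cfc h x) = cfc h x * x * cfc h x := by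
          rw [star_mul, hsa.star_eq]; simp only [x, mul_assoc]
      _ = cfc (fun t => h t * t * h t) x := by
          rw [cfc_mul _ _ x (by fun_prop) hh.continuousOn, cfc_mul h _ x hh.continuousOn
            (by fun_prop), cfc_id' ℝ x]
      _ = cfc (fun t => t * h t ^ 2) x := cfc_congr fun t _ => by ring
  refine (pow_le_pow_iff_left₀ (norm_nonneg _) hC two_ne_zero).mp ?_
  rw [sq, ← CStarRing.norm_star_mul_self, hsq]
  refine norm_cfc_le (sq_nonneg C) fun t ht => ?_
  have ht' := spectrum_star_mul_self_subset_Icc a ht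
  rw [Real.norm_eq_abs, abs_of_nonneg (mul_nonneg ht'.1 (sq_nonneg _))]
  exact hbound t ht'

namespace TwoSidedIdeal

variable {I : TwoSidedIdeal A}

theorem cfc_sub_cfc_mem (hI : IsClosed (I : Set A))
    {a b : A} (ha : IsSelfAdjoint a) (hb : IsSelfAdjoint b) (hab : a - b ∈ I)
    {f : ℝ → ℝ} (hf : Continuous f) : cfc f a - cfc f b ∈ I := by
  rw [← SetLike.mem_coe, ← hI.closure_eq, Metric.mem_closure_iff]
  intro ε hε
  obtain ⟨R, hR⟩ := ((spectrum.isCompact (𝕜 := ℝ) a).union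
    (spectrum.isCompact b)).isBounded.subset_closedBall 0
  rw [Real.closedBall_eq_Icc, zero_sub, zero_add] at hR
  obtain ⟨p, hp⟩ := exists_polynomial_near_of_continuousOn (-R) R f hf.continuousOn (ε / 3)
    (by positivity)
  refine ⟨aeval a p - aeval b p, I.aeval_sub_aeval_mem hab p, ?_⟩
  have hpa := norm_cfc_sub_aeval_le ha hf (by positivity) fun t ht => (hp t (hR (.inl ht))).le
  have hpb := norm_cfc_sub_aeval_le hb hf (by positivity) fun t ht => (hp t (hR (.inr ht))).le
  calc dist (cfc f a - cfc f b) (aeval a p - aeval b p)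
      = ‖(cfc f a - aeval a p) - (cfc f b - aeval b p)‖ := by
        rw [dist_eq_norm, sub_sub_sub_comm]
    _ ≤ ε / 3 + ε / 3 := (norm_sub_le _ _).trans (add_le_add hpa hpb)
    _ < ε := by linarith

theorem exists_mem_norm_le_one_norm_sub_le (hI : IsClosed (I : Set A))
    (hI_star : ∀ j ∈ I, star j ∈ I) {a j : A} (hj : j ∈ I) {c : ℝ} (hac : ‖a - j‖ < c)
    (ha : ‖a‖ ≤ c + 1) : ∃ k ∈ I, ‖k‖ ≤ 1 ∧ ‖a - k‖ ≤ c := by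
  have hc : 0 < c := (norm_nonneg _).trans_lt hac
  set x := star a * a
  set y := star (a - j) * (a - j)
  have hxy : x - y ∈ I := by
    have : x - y = star a * j + star j * (a - j) := by simp only [x, y, star_sub]; noncomm_ring
    rw [this]
    exact I.add_mem (I.mul_mem_left _ _ hj) (I.mul_mem_right _ _ (hI_star j hj))
  have hgy : cfc (sqrtCutoff c) y = 1 := by
    refine (cfc_congr fun t ht => sqrtCutoff_of_le_sq hc ?_).trans
      (cfc_const_one ℝ y (.star_mul_self _))
    exact (spectrum_star_mul_self_subset_Icc _ ht).2.trans (by gcongr)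
  have hgx : cfc (sqrtCutoff c) x - 1 ∈ I := hgy ▸ I.cfc_sub_cfc_mem hI
    (.star_mul_self a) (.star_mul_self _) hxy (continuous_sqrtCutoff hc)
  have hk : a * cfc (fun t => 1 - sqrtCutoff c t) x = a - a * cfc (sqrtCutoff c) x := by
    rw [cfc_sub _ _ x (by fun_prop) (continuous_sqrtCutoff hc).continuousOn, cfc_const_one ℝ x,
      mul_sub, mul_one]
  refine ⟨a * cfc (fun t => 1 - sqrtCutoff c t) x, ?_, ?_, ?_⟩
  · rw [hk, ← neg_sub, ← mul_sub_one]
    exact I.neg_mem (I.mul_mem_left _ _ hgx)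
  · refine norm_mul_cfc_star_mul_self_le a (continuous_const.sub (continuous_sqrtCutoff hc))
      zero_le_one fun t ht => ?_
    rw [one_pow]
    exact mul_one_sub_sqrtCutoff_sq_le hc ht.1 (ht.2.trans (by gcongr))
  · rw [hk, sub_sub_cancel]
    exact norm_mul_cfc_star_mul_self_le a (continuous_sqrtCutoff hc) hc.le fun t ht =>
      mul_sqrtCutoff_sq_le hc ht.1

theorem infDist_inter_closedBall_eq_max (hI : IsClosed (I : Set A))
    (hI_star : ∀ j ∈ I, star j ∈ I) (a : A) :
    infDist a ((I : Set A) ∩ closedBall 0 1) = max (‖a‖ - 1) (infDist a I) := by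
  have hne : ((I : Set A) ∩ closedBall 0 1).Nonempty := ⟨0, I.zero_mem, by simp⟩
  apply le_antisymm
  · refine le_of_forall_gt_imp_ge_of_dense fun c hc => ?_
    obtain ⟨j, hj, haj⟩ :=
      (infDist_lt_iff ⟨0, I.zero_mem⟩).mp ((le_max_right _ _).trans_lt hc)
    rw [dist_eq_norm] at haj
    obtain ⟨k, hk, hk1, hak⟩ := exists_mem_norm_le_one_norm_sub_le hI hI_star hj haj
      (by linarith [le_max_left (‖a‖ - 1) (infDist a I)])
    calc infDist a ((I : Set A) ∩ closedBall 0 1) ≤ dist a k :=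
          infDist_le_dist_of_mem ⟨hk, mem_closedBall_zero_iff.mpr hk1⟩
      _ ≤ c := (dist_eq_norm a k).trans_le hak
  · refine max_le ((le_infDist hne).mpr fun k hk => ?_)
      (infDist_le_infDist_of_subset inter_subset_left hne)
    have hk1 : ‖k‖ ≤ 1 := mem_closedBall_zero_iff.mp hk.2
    linarith [norm_sub_norm_le a k, dist_eq_norm a k]

end TwoSidedIdeal

end CStarAlgebra

section CompactOperators

variable (𝕜 E : Type*) [NontriviallyNormedField 𝕜] [NormedAddCommGroup E] [NormedSpace 𝕜 E]

def compactOperatorIdeal : TwoSidedIdeal (E →L[𝕜] E) :=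
  .mk' {K : E →L[𝕜] E | IsCompactOperator K} isCompactOperator_zero (fun hK hL => hK.add hL)
    (fun hK => hK.neg) (fun {L _} hK => hK.clm_comp L) (fun {_ L} hK => hK.comp_clm L)

variable {𝕜 E} in
theorem mem_compactOperatorIdeal {K : E →L[𝕜] E} :
    K ∈ compactOperatorIdeal 𝕜 E ↔ IsCompactOperator K :=
  TwoSidedIdeal.mem_mk' ..

theorem coe_compactOperatorIdeal :
    (compactOperatorIdeal 𝕜 E : Set (E →L[𝕜] E)) =
      {K : E →L[𝕜] E | IsCompactOperator K} :=
  Set.ext fun _ => mem_compactOperatorIdeal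

theorem isClosed_compactOperatorIdeal [CompleteSpace E] :
    IsClosed (compactOperatorIdeal 𝕜 E : Set (E →L[𝕜] E)) :=
  coe_compactOperatorIdeal 𝕜 E ▸ isClosed_setOfPred_isCompactOperator

end CompactOperators

section Adjoint

variable {𝕜 E F : Type*} [RCLike 𝕜] [NormedAddCommGroup E] [InnerProductSpace 𝕜 E]
  [CompleteSpace E] [NormedAddCommGroup F] [InnerProductSpace 𝕜 F] [CompleteSpace F]

open ContinuousLinearMap
open scoped InnerProduct

theorem ContinuousLinearMap.norm_adjoint_apply_sq_le (C : E →L[𝕜] F) (z : F) :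
    ‖(C†) z‖ ^ 2 ≤ ‖C ((C†) z)‖ * ‖z‖ := by
  rw [apply_norm_sq_eq_inner_adjoint_left, adjoint_adjoint]
  exact (RCLike.re_le_norm _).trans (norm_inner_le_norm _ _)

theorem IsCompactOperator.adjoint {C : E →L[𝕜] F} (hC : IsCompactOperator C) :
    IsCompactOperator (C†) := by
  have hP : TotallyBounded ((C ∘L C†) '' ball 0 1) :=
    ((hC.comp_clm (C†)).isCompact_closure_image_ball
      (f := (C ∘L C† : F →ₗ[𝕜] F)) 1).totallyBounded.subset subset_closure
  refine (isCompactOperator_iff_isCompact_closure_image_ball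
    (C† : F →ₗ[𝕜] E) zero_lt_one).mpr ?_
  refine (totallyBounded_image_of_forall_dist_lt hP fun ε hε =>
    ⟨ε ^ 2 / 2, by positivity, fun x hx y hy hxy => ?_⟩).closure.isCompact_of_isClosed
      isClosed_closure
  rw [mem_ball_zero_iff] at hx hy
  have hxy2 : ‖x - y‖ < 2 := (norm_sub_le x y).trans_lt (by linarith)
  rw [dist_eq_norm, ← map_sub] at hxy ⊢
  refine (pow_lt_pow_iff_left₀ (norm_nonneg _) hε.le two_ne_zero).mp ?_
  calc ‖(C†) (x - y)‖ ^ 2 ≤ ‖C ((C†) (x - y))‖ * ‖x - y‖ :=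
        C.norm_adjoint_apply_sq_le (x - y)
    _ ≤ ‖C ((C†) (x - y))‖ * 2 := by gcongr
    _ < ε ^ 2 / 2 * 2 := by gcongr; exact hxy
    _ = ε ^ 2 := by ring

theorem star_mem_compactOperatorIdeal {K : E →L[𝕜] E}
    (hK : K ∈ compactOperatorIdeal 𝕜 E) :
    star K ∈ compactOperatorIdeal 𝕜 E :=
  mem_compactOperatorIdeal.mpr <| K.star_eq_adjoint ▸ (mem_compactOperatorIdeal.mp hK).adjoint

end Adjoint

theorem stmt_0_general {H : Type*} [NormedAddCommGroup H] [InnerProductSpace ℂ H] [CompleteSpace H]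
    (T : H →L[ℂ] H) :
    Metric.infDist T {K : H →L[ℂ] H | IsCompactOperator ⇑K ∧ ‖K‖ ≤ 1}
      = max (‖T‖ - 1) (Metric.infDist T {K : H →L[ℂ] H | IsCompactOperator ⇑K}) := by
  have hball : {K : H →L[ℂ] H | IsCompactOperator ⇑K ∧ ‖K‖ ≤ 1}
      = (compactOperatorIdeal ℂ H : Set (H →L[ℂ] H)) ∩ closedBall 0 1 := by
    ext K
    simp [coe_compactOperatorIdeal]
  rw [hball, ← coe_compactOperatorIdeal]
  exact (compactOperatorIdeal ℂ H).infDist_inter_closedBall_eq_max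
    (isClosed_compactOperatorIdeal ℂ H)
    (fun _ => star_mem_compactOperatorIdeal) T

/-- For an infinite-dimensional complex Hilbert space `H` and any bounded operator `T` on `H`,
the distance from `T` to the closed unit ball of the compact operators equals
`max (‖T‖ - 1) (d(T, K(H)))`. -/
theorem stmt_0 {H : Type*} [NormedAddCommGroup H] [InnerProductSpace ℂ H] [CompleteSpace H]
    (hH : ¬ FiniteDimensional ℂ H) (T : H →L[ℂ] H) :
    Metric.infDist T {K : H →L[ℂ] H | IsCompactOperator ⇑K ∧ ‖K‖ ≤ 1}
      = max (‖T‖ - 1) (Metric.infDist T {K : H →L[ℂ] H | IsCompactOperator ⇑K}) :=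
  stmt_0_general T
end

section
/- Let H be an infinite-dimensional complex Hilbert space and let V be a bounded linear operator on H that is either an isometry (‖Vx‖ = ‖x‖ for all x ∈ H) or a co-isometry (its Hilbert-space adjoint V* is an isometry). Then for every a ∈ ℂ, d(aV, B_{K(H)}) = d(aV, K(H)). -/
/-!
Both distances equal `‖a • V‖`: the zero operator lies in the smaller set, and
`‖a • V‖ ≤ |a| ≤ ‖a • V - K‖` for every compact `K`. For the last bound, `V` has a one-sided
inverse `V†` of norm at most one, which reduces it to `V = 1`; and if `‖a • 1 - K‖ < |a|`, a
Neumann series makes `K` invertible, so the identity would be compact and `H`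
finite-dimensional.
-/

open ContinuousLinearMap Metric

section Banach

variable {𝕜 E : Type*} [NontriviallyNormedField 𝕜] [CompleteSpace 𝕜]
  [NormedAddCommGroup E] [NormedSpace 𝕜 E]

theorem IsCompactOperator.not_isUnit (hE : ¬ FiniteDimensional 𝕜 E) {K : E →L[𝕜] E}
    (hK : IsCompactOperator K) : ¬ IsUnit K := by
  rintro ⟨u, rfl⟩
  refine hE (FiniteDimensional.of_isCompactOperator_id ?_)
  have hid : (↑u⁻¹ : E →L[𝕜] E) ∘L ↑u = ContinuousLinearMap.id 𝕜 E := u.inv_mul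
  simpa [← coe_comp, hid] using hK.clm_comp (↑u⁻¹ : E →L[𝕜] E)

variable [CompleteSpace E]

theorem norm_le_norm_smul_one_sub_of_isCompactOperator (hE : ¬ FiniteDimensional 𝕜 E) (a : 𝕜)
    {K : E →L[𝕜] E} (hK : IsCompactOperator K) : ‖a‖ ≤ ‖a • 1 - K‖ := by
  by_contra! h
  have ha : a ∈ resolventSet 𝕜 (a • 1 - K) :=
    spectrum.mem_resolventSet_of_norm_lt_mul
      ((mul_le_of_le_one_right (norm_nonneg _) norm_id_le).trans_lt h)
  rw [spectrum.mem_resolventSet_iff, Algebra.algebraMap_eq_smul_one, sub_sub_cancel] at ha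
  exact hK.not_isUnit hE ha

theorem norm_le_norm_smul_sub_of_comp_eq_one_left (hE : ¬ FiniteDimensional 𝕜 E) (a : 𝕜)
    {L V K : E →L[𝕜] E} (hLV : L ∘L V = 1) (hL : ‖L‖ ≤ 1) (hK : IsCompactOperator K) :
    ‖a‖ ≤ ‖a • V - K‖ :=
  calc ‖a‖ ≤ ‖a • 1 - L ∘L K‖ :=
        norm_le_norm_smul_one_sub_of_isCompactOperator hE a (hK.clm_comp L)
    _ = ‖L ∘L (a • V - K)‖ := by rw [comp_sub, comp_smul, hLV]
    _ ≤ ‖L‖ * ‖a • V - K‖ := opNorm_comp_le _ _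
    _ ≤ ‖a • V - K‖ := mul_le_of_le_one_left (norm_nonneg _) hL

theorem norm_le_norm_smul_sub_of_comp_eq_one_right (hE : ¬ FiniteDimensional 𝕜 E) (a : 𝕜)
    {R V K : E →L[𝕜] E} (hVR : V ∘L R = 1) (hR : ‖R‖ ≤ 1) (hK : IsCompactOperator K) :
    ‖a‖ ≤ ‖a • V - K‖ :=
  calc ‖a‖ ≤ ‖a • 1 - K ∘L R‖ :=
        norm_le_norm_smul_one_sub_of_isCompactOperator hE a (hK.comp_clm R)
    _ = ‖(a • V - K) ∘L R‖ := by rw [sub_comp, smul_comp, hVR]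
    _ ≤ ‖a • V - K‖ * ‖R‖ := opNorm_comp_le _ _
    _ ≤ ‖a • V - K‖ := mul_le_of_le_one_right (norm_nonneg _) hR

end Banach

section Hilbert

variable {𝕜 H : Type*} [RCLike 𝕜] [NormedAddCommGroup H] [InnerProductSpace 𝕜 H]
  [CompleteSpace H]

theorem norm_le_norm_smul_sub_of_norm_map (hH : ¬ FiniteDimensional 𝕜 H) (a : 𝕜)
    {V K : H →L[𝕜] H} (hV : ∀ x, ‖V x‖ = ‖x‖) (hK : IsCompactOperator K) :
    ‖a‖ ≤ ‖a • V - K‖ := by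
  refine norm_le_norm_smul_sub_of_comp_eq_one_left hH a ((norm_map_iff_adjoint_comp_self V).1 hV)
    ?_ hK
  rw [LinearIsometryEquiv.norm_map]
  exact V.opNorm_le_bound zero_le_one (by simp [hV])

theorem norm_le_norm_smul_sub_of_norm_map_adjoint (hH : ¬ FiniteDimensional 𝕜 H) (a : 𝕜)
    {V K : H →L[𝕜] H} (hV : ∀ x, ‖adjoint V x‖ = ‖x‖) (hK : IsCompactOperator K) :
    ‖a‖ ≤ ‖a • V - K‖ := by
  have hVV : V ∘L adjoint V = 1 := by
    simpa using (norm_map_iff_adjoint_comp_self (adjoint V)).1 hV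
  exact norm_le_norm_smul_sub_of_comp_eq_one_right hH a hVV
    ((adjoint V).opNorm_le_bound zero_le_one (by simp [hV])) hK

end Hilbert

theorem Metric.infDist_eq_norm_of_zero_mem {E : Type*} [SeminormedAddCommGroup E] {x : E}
    {s : Set E} (h0 : 0 ∈ s) (h : ∀ y ∈ s, ‖x‖ ≤ ‖x - y‖) : infDist x s = ‖x‖ :=
  le_antisymm (by simpa using infDist_le_dist_of_mem (x := x) h0)
    ((le_infDist ⟨0, h0⟩).2 fun y hy => by simpa [dist_eq_norm] using h y hy)

/-- For an infinite-dimensional complex Hilbert space `H` and a bounded operator `V` on `H`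
that is an isometry or a co-isometry, `d(aV, B_{K(H)}) = d(aV, K(H))` for every `a ∈ ℂ`. -/
theorem stmt_4 {H : Type*} [NormedAddCommGroup H] [InnerProductSpace ℂ H] [CompleteSpace H]
    (hH : ¬ FiniteDimensional ℂ H) (V : H →L[ℂ] H)
    (hV : (∀ x : H, ‖V x‖ = ‖x‖) ∨ (∀ x : H, ‖(ContinuousLinearMap.adjoint V) x‖ = ‖x‖))
    (a : ℂ) :
    Metric.infDist (a • V) {K : H →L[ℂ] H | IsCompactOperator ⇑K ∧ ‖K‖ ≤ 1}
      = Metric.infDist (a • V) {K : H →L[ℂ] H | IsCompactOperator ⇑K} := by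
  have hV1 : ‖V‖ ≤ 1 := by
    rcases hV with hV | hV
    · exact V.opNorm_le_bound zero_le_one (by simp [hV])
    · rw [← LinearIsometryEquiv.norm_map adjoint V]
      exact (adjoint V).opNorm_le_bound zero_le_one (by simp [hV])
  have hess : ∀ K : H →L[ℂ] H, IsCompactOperator K → ‖a‖ ≤ ‖a • V - K‖ := fun K hK =>
    hV.elim (norm_le_norm_smul_sub_of_norm_map hH a · hK)
      (norm_le_norm_smul_sub_of_norm_map_adjoint hH a · hK)
  have hnear : ∀ K : H →L[ℂ] H, IsCompactOperator K → ‖a • V‖ ≤ ‖a • V - K‖ := fun K hK =>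
    calc ‖a • V‖ ≤ ‖a‖ * ‖V‖ := norm_smul_le a V
      _ ≤ ‖a‖ := mul_le_of_le_one_right (norm_nonneg a) hV1
      _ ≤ ‖a • V - K‖ := hess K hK
  have h0 : (0 : H →L[ℂ] H) ∈ {K : H →L[ℂ] H | IsCompactOperator K ∧ ‖K‖ ≤ 1} :=
    ⟨isCompactOperator_zero, by simp⟩
  exact (infDist_eq_norm_of_zero_mem h0 fun K hK => hnear K hK.1).trans
    (infDist_eq_norm_of_zero_mem isCompactOperator_zero hnear).symm
end

section
/- Let X be a Banach space such that K(X) is an M-ideal in B(X). Then for every T ∈ B(X), d(T, B_{K(X)}) = max{ ‖T‖ − 1, d(T, K(X)) }. -/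
/-!
Suppose `d(x, B_J) > r > max (‖x‖ - 1) (d(x, J))`. Separating the ball `B(x, r)` from the convex
set `B_J = J ∩ B(0, 1)` gives a functional `F ≠ 0` with `Re F y + r‖F‖ ≤ Re F x` on `B_J`.
Split `F = φ + ψ` with `φ = P F ∈ J⊥`, where `P` is the L-projection onto `J⊥`. Then `ψ` agrees
with `F` on `J`, and in an M-ideal `‖ψ‖` is the norm of its restriction to `J`, so
`‖ψ‖ ≤ Re F x - r‖F‖`. Since `φ` vanishes on `J`, `Re φ x ≤ ‖φ‖ d(x, J)`, hence
`r‖F‖ ≤ ‖φ‖ d(x, J) + ‖ψ‖ (‖x‖ - 1) ≤ (‖φ‖ + ‖ψ‖) max (‖x‖ - 1) (d(x, J)) = ‖F‖ max (…)`,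
a contradiction.
-/

open Metric RCLike StrongDual

section

variable {𝕜 E : Type*} [RCLike 𝕜] [NormedAddCommGroup E] [NormedSpace 𝕜 E]

def IsMIdeal (J : Submodule 𝕜 E) : Prop :=
  ∃ P : StrongDual 𝕜 E →L[𝕜] StrongDual 𝕜 E,
    IsLprojection (StrongDual 𝕜 E) P ∧ Set.range P = polarSubmodule 𝕜 J

theorem sub_le_infDist_of_subset_closedBall {S : Set E} {R : ℝ} (hS : S.Nonempty)
    (hSR : S ⊆ closedBall 0 R) (x : E) : ‖x‖ - R ≤ infDist x S :=
  (le_infDist hS).2 fun y hy => by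
    have hy : ‖y‖ ≤ R := mem_closedBall_zero_iff.1 (hSR hy)
    linarith [dist_eq_norm x y, norm_sub_norm_le x y]

theorem StrongDual.norm_apply_le_mul_infDist {φ : StrongDual 𝕜 E} {S : Set E} (hS : S.Nonempty)
    (hφ : ∀ y ∈ S, φ y = 0) (x : E) : ‖φ x‖ ≤ ‖φ‖ * infDist x S := by
  rcases (norm_nonneg φ).eq_or_lt with h | h
  · simpa [← h] using φ.le_opNorm x
  rw [← div_le_iff₀' h]
  refine (le_infDist hS).2 fun y hy => ?_
  rw [div_le_iff₀' h, dist_eq_norm]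
  calc ‖φ x‖ = ‖φ (x - y)‖ := by rw [map_sub, hφ y hy, sub_zero]
    _ ≤ ‖φ‖ * ‖x - y‖ := φ.le_opNorm _

theorem StrongDual.norm_comp_subtypeL_le_of_re_le {F : StrongDual 𝕜 E} {J : Submodule 𝕜 E}
    {c : ℝ} (h : ∀ y ∈ J, ‖y‖ ≤ 1 → re (F y) ≤ c) : ‖F.comp J.subtypeL‖ ≤ c := by
  refine div_one c ▸ (F.comp J.subtypeL).opNorm_bound_of_ball_bound one_pos c fun z hz => ?_
  obtain ⟨a, ha, haz⟩ := exists_norm_eq_mul_self (F z)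
  have hre := h (a • z) (J.smul_mem a z.2) (by
    simpa [norm_smul, ha] using mem_closedBall_zero_iff.1 hz)
  simpa [← haz] using hre

theorem StrongDual.exists_re_add_mul_norm_le_of_lt_infDist [NormedSpace ℝ E]
    [IsScalarTower ℝ 𝕜 E] {C : Set E} (hC : Convex ℝ C) (hCne : C.Nonempty) {x : E} {r : ℝ}
    (hr : 0 < r) (hrC : r < infDist x C) :
    ∃ F : StrongDual 𝕜 E, 0 < ‖F‖ ∧ ∀ y ∈ C, re (F y) + r * ‖F‖ ≤ re (F x) := by
  obtain ⟨r', hrr', hr'C⟩ := exists_between hrC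
  obtain ⟨g, s, hball, hsep⟩ := geometric_hahn_banach_open (convex_ball x r') isOpen_ball hC
    ((disjoint_ball_infDist).mono_left (ball_subset_ball hr'C.le))
  have hgx : g x < s := hball x (mem_ball_self (hr.trans hrr'))
  have hg : ‖g‖ ≤ (s - g x) / r := by
    refine g.opNorm_bound_of_ball_bound hr _ fun z hz => ?_
    have hmem : ∀ w : E, ‖w‖ ≤ r → x + w ∈ ball x r' := fun w hw => by
      simpa [mem_ball, dist_eq_norm] using hw.trans_lt hrr'
    have hz := mem_closedBall_zero_iff.1 hz
    have hplus := hball _ (hmem z hz)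
    have hminus := hball _ (hmem (-z) (by rwa [norm_neg]))
    rw [map_add] at hplus
    rw [map_add, map_neg] at hminus
    exact abs_le.2 ⟨by linarith, by linarith⟩
  obtain ⟨y₀, hy₀⟩ := hCne
  refine ⟨extendRCLike (-g), ?_, fun y hy => ?_⟩
  · rw [norm_extendRCLike, norm_neg, norm_pos_iff]
    rintro rfl
    exact (hgx.trans_le (hsep y₀ hy₀)).false
  · simp only [re_extendRCLike_apply, norm_extendRCLike, norm_neg, neg_apply]
    have hy' := hsep y hy
    rw [le_div_iff₀' hr] at hg
    linarith

theorem IsLprojection.norm_le_norm_comp_subtypeL {J : Submodule 𝕜 E}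
    {P : StrongDual 𝕜 E →L[𝕜] StrongDual 𝕜 E} (hP : IsLprojection (StrongDual 𝕜 E) P)
    (hrange : Set.range P = polarSubmodule 𝕜 J) {ψ : StrongDual 𝕜 E} (hψ : P ψ = 0) :
    ‖ψ‖ ≤ ‖ψ.comp J.subtypeL‖ := by
  -- `ψ` and a norm-preserving extension `G` of `ψ|_J` differ by an element of `J⊥`,
  -- so `(1 - P) G = ψ` and the L-decomposition of `G` gives `‖ψ‖ ≤ ‖G‖`.
  obtain ⟨G, hGψ, hG⟩ := exists_extension_norm_eq J (ψ.comp J.subtypeL)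
  have hdiff : ψ - G ∈ Set.range P := by
    rw [hrange, SetLike.mem_coe, mem_polarSubmodule]
    intro y hy
    simpa [sub_eq_zero] using (hGψ ⟨y, hy⟩).symm
  obtain ⟨χ, hχ⟩ := hdiff
  have hPG : P G = G - ψ := by
    have hfix : P (ψ - G) = ψ - G := by
      rw [← hχ]
      exact DFunLike.congr_fun hP.proj.eq χ
    rw [map_sub, hψ, zero_sub, neg_eq_iff_eq_neg] at hfix
    rw [hfix, neg_sub]
  have hsplit := hP.Lnorm G
  simp only [ContinuousLinearMap.smul_def, sub_apply,
    one_apply_eq_self, hPG, sub_sub_cancel] at hsplit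
  linarith [norm_nonneg (G - ψ)]

theorem IsMIdeal.infDist_inter_closedBall_le [NormedSpace ℝ E] [IsScalarTower ℝ 𝕜 E]
    {J : Submodule 𝕜 E} (hJ : IsMIdeal J) (x : E) :
    infDist x (J ∩ closedBall 0 1) ≤ max (‖x‖ - 1) (infDist x J) := by
  set M := max (‖x‖ - 1) (infDist x J)
  have hM : 0 ≤ M := le_max_of_le_right infDist_nonneg
  by_contra! hlt
  obtain ⟨r, hMr, hr⟩ := exists_between hlt
  have hBJ : Convex ℝ (J ∩ closedBall (0 : E) 1 : Set E) :=
    (J.restrictScalars ℝ).convex.inter (convex_closedBall 0 1)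
  obtain ⟨F, hF, hsep⟩ := exists_re_add_mul_norm_le_of_lt_infDist (𝕜 := 𝕜) hBJ
    ⟨0, J.zero_mem, by simp⟩ (hM.trans_lt hMr) hr
  obtain ⟨P, hP, hrange⟩ := hJ
  set φ := P F
  set ψ := F - P F
  have hφ : ∀ y ∈ J, φ y = 0 := by
    have hφP : φ ∈ Set.range P := ⟨F, rfl⟩
    rwa [hrange, SetLike.mem_coe, mem_polarSubmodule] at hφP
  have hψ : P ψ = 0 := by
    rw [map_sub, sub_eq_zero]
    exact (DFunLike.congr_fun hP.proj.eq F).symm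
  have hψJ : ‖ψ.comp J.subtypeL‖ ≤ re (F x) - r * ‖F‖ :=
    norm_comp_subtypeL_le_of_re_le fun y hy hy1 => by
      have hy' := hsep y ⟨hy, mem_closedBall_zero_iff.2 hy1⟩
      rw [sub_apply, hφ y hy, sub_zero]
      linarith
  have hψnorm := (hP.norm_le_norm_comp_subtypeL hrange hψ).trans hψJ
  have hsplit : ‖F‖ = ‖φ‖ + ‖ψ‖ := by
    simpa [ContinuousLinearMap.smul_def] using hP.Lnorm F
  have hFx : re (F x) ≤ ‖φ‖ * infDist x J + ‖ψ‖ * ‖x‖ :=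
    calc re (F x) = re (φ x) + re (ψ x) := by simp [φ, ψ]
      _ ≤ ‖φ x‖ + ‖ψ x‖ := add_le_add (re_le_norm _) (re_le_norm _)
      _ ≤ ‖φ‖ * infDist x J + ‖ψ‖ * ‖x‖ :=
        add_le_add (norm_apply_le_mul_infDist ⟨0, J.zero_mem⟩ hφ x) (ψ.le_opNorm x)
  have hrM : r * ‖F‖ ≤ M * ‖F‖ :=
    calc r * ‖F‖ ≤ re (F x) - ‖ψ‖ := by linarith
      _ ≤ ‖φ‖ * infDist x J + ‖ψ‖ * (‖x‖ - 1) := by linarith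
      _ ≤ ‖φ‖ * M + ‖ψ‖ * M := by gcongr; exacts [le_max_right _ _, le_max_left _ _]
      _ = M * ‖F‖ := by rw [hsplit]; ring
  exact hMr.not_ge (le_of_mul_le_mul_right hrM hF)

theorem IsMIdeal.infDist_inter_closedBall_eq [NormedSpace ℝ E] [IsScalarTower ℝ 𝕜 E]
    {J : Submodule 𝕜 E} (hJ : IsMIdeal J) (x : E) :
    infDist x (J ∩ closedBall 0 1) = max (‖x‖ - 1) (infDist x J) := by
  have hne : (J ∩ closedBall (0 : E) 1 : Set E).Nonempty := ⟨0, J.zero_mem, by simp⟩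
  refine (hJ.infDist_inter_closedBall_le x).antisymm (max_le ?_ ?_)
  · exact sub_le_infDist_of_subset_closedBall hne Set.inter_subset_right x
  · exact infDist_le_infDist_of_subset Set.inter_subset_left hne

end

theorem stmt_8_general {X : Type*} [NormedAddCommGroup X] [NormedSpace ℂ X]
    (P : ((X →L[ℂ] X) →L[ℂ] ℂ) →L[ℂ] ((X →L[ℂ] X) →L[ℂ] ℂ))
    (hProj : ∀ φ, P (P φ) = P φ)
    (hL : ∀ φ : (X →L[ℂ] X) →L[ℂ] ℂ, ‖φ‖ = ‖P φ‖ + ‖φ - P φ‖)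
    (hRange : Set.range ⇑P
      = {φ : (X →L[ℂ] X) →L[ℂ] ℂ | ∀ K : X →L[ℂ] X, IsCompactOperator ⇑K → φ K = 0})
    (T : X →L[ℂ] X) :
    Metric.infDist T {K : X →L[ℂ] X | IsCompactOperator ⇑K ∧ ‖K‖ ≤ 1}
      = max (‖T‖ - 1) (Metric.infDist T {K : X →L[ℂ] X | IsCompactOperator ⇑K}) := by
  have hJ : IsMIdeal (compactOperator (RingHom.id ℂ) X X) := by
    refine ⟨P, ⟨ContinuousLinearMap.ext hProj, fun φ => ?_⟩, ?_⟩
    · simpa [ContinuousLinearMap.smul_def] using hL φ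
    · rw [hRange, polarSubmodule_eq_setOfPred]
      rfl
  have hball : {K : X →L[ℂ] X | IsCompactOperator ⇑K ∧ ‖K‖ ≤ 1}
      = (compactOperator (RingHom.id ℂ) X X : Set (X →L[ℂ] X)) ∩ closedBall 0 1 := by
    ext K
    rw [Set.mem_inter_iff, mem_closedBall_zero_iff]
    rfl
  rw [hball]
  exact hJ.infDist_inter_closedBall_eq T

/-- If `K(X)` is an `M`-ideal in `B(X)` (witnessed by an `L`-projection `P` on `B(X)*` with
range the annihilator of the compact operators), then for every `T ∈ B(X)`,
`d(T, B_{K(X)}) = max (‖T‖ - 1) (d(T, K(X)))`. -/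
theorem stmt_8 {X : Type*} [NormedAddCommGroup X] [NormedSpace ℂ X] [CompleteSpace X]
    (P : ((X →L[ℂ] X) →L[ℂ] ℂ) →L[ℂ] ((X →L[ℂ] X) →L[ℂ] ℂ))
    (hProj : ∀ φ, P (P φ) = P φ)
    (hL : ∀ φ : (X →L[ℂ] X) →L[ℂ] ℂ, ‖φ‖ = ‖P φ‖ + ‖φ - P φ‖)
    (hRange : Set.range ⇑P
      = {φ : (X →L[ℂ] X) →L[ℂ] ℂ | ∀ K : X →L[ℂ] X, IsCompactOperator ⇑K → φ K = 0})
    (T : X →L[ℂ] X) :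
    Metric.infDist T {K : X →L[ℂ] X | IsCompactOperator ⇑K ∧ ‖K‖ ≤ 1}
      = max (‖T‖ - 1) (Metric.infDist T {K : X →L[ℂ] X | IsCompactOperator ⇑K}) :=
  stmt_8_general P hProj hL hRange T
end

section
/- Let H be a separable infinite-dimensional complex Hilbert space and let T be a positive bounded linear operator on H. Then there exists a compact positive operator K on H such that ‖T − K‖ = d(T, K(H)). -/
/-!
Let `m = d(T, K(H))` and `K = (T - m)₊`. Since `T ≥ 0`, cutting the spectrum down by `m` moves
`T` by at most `m`, so `‖T - K‖ ≤ m`. For `c > m` pick a compact `C` with `‖T - C‖ < c`. On the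
range of `(T - c)₊` we have `re ⟪T x, x⟫ ≥ c ‖x‖²`, hence `‖C x‖ ≥ (c - ‖T - C‖) ‖x‖`: the operator
`(T - c)₊` is dominated by the compact operator `C (T - c)₊` and is therefore compact. Finally
`c ↦ (T - c)₊` is `1`-Lipschitz and `K(H)` is closed, so `K` is compact.
-/

open scoped ComplexInnerProductSpace
open Metric Set Filter Topology

section Domination

variable {𝕜 E F G : Type*} [NontriviallyNormedField 𝕜]
  [NormedAddCommGroup E] [NormedSpace 𝕜 E] [NormedAddCommGroup F] [NormedSpace 𝕜 F]
  [NormedAddCommGroup G] [NormedSpace 𝕜 G]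

theorem IsCompactOperator.of_norm_le_mul_norm [CompleteSpace F] {A : E →L[𝕜] F} {B : E →L[𝕜] G}
    (hB : IsCompactOperator B) {k : ℝ} (h : ∀ x, ‖A x‖ ≤ k * ‖B x‖) : IsCompactOperator A := by
  set S : Set E := closedBall 0 1
  refine (isCompactOperator_iff_isCompact_closure_image_closedBall (A : E →ₗ[𝕜] F) one_pos).2 ?_
  change IsCompact (closure (A '' S))
  refine (TotallyBounded.closure ?_).isCompact_of_isClosed isClosed_closure
  have hBS : TotallyBounded (B '' S) :=
    (hB.isCompact_closure_image_closedBall (f := (B : E →ₗ[𝕜] G)) 1).totallyBounded.subset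
      subset_closure
  refine totallyBounded_iff.2 fun ε hε => ?_
  have hη : 0 < ε / (|k| + 1) := by positivity
  obtain ⟨t, htS, htfin, hcover⟩ := finite_approx_of_totallyBounded hBS _ hη
  obtain ⟨u, -, huinj, rfl⟩ :=
    ((surjOn_image B S).mono subset_rfl htS).exists_subset_injOn_image_eq
  refine ⟨A '' u, (htfin.of_finite_image huinj).image A, ?_⟩
  rintro - ⟨x, hx, rfl⟩
  obtain ⟨-, ⟨z, hz, rfl⟩, hxz⟩ := mem_iUnion₂.1 (hcover ⟨x, hx, rfl⟩)
  refine mem_iUnion₂.2 ⟨A z, mem_image_of_mem A hz, ?_⟩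
  rw [mem_ball, dist_eq_norm, ← map_sub] at hxz ⊢
  calc ‖A (x - z)‖ ≤ k * ‖B (x - z)‖ := h _
    _ ≤ |k| * ‖B (x - z)‖ := by gcongr; exact le_abs_self k
    _ ≤ |k| * (ε / (|k| + 1)) := by gcongr
    _ < (|k| + 1) * (ε / (|k| + 1)) := by gcongr; linarith
    _ = ε := by field_simp

end Domination

section CStar

variable {A : Type*} [CStarAlgebra A]

/-- `(a - c)₊`; this is `0` when `a` is not self-adjoint. -/
noncomputable def posPartSub (a : A) (c : ℝ) : A := cfc (fun t : ℝ => max (t - c) 0) a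

theorem lipschitzWith_posPartSub (a : A) : LipschitzWith 1 (posPartSub a) := by
  refine LipschitzWith.of_dist_le_mul fun c c' => ?_
  rw [dist_eq_norm, posPartSub, posPartSub, ← cfc_sub .., NNReal.coe_one, one_mul, Real.dist_eq]
  refine norm_cfc_le (abs_nonneg _) fun t _ => ?_
  calc ‖max (t - c) 0 - max (t - c') 0‖ ≤ |(t - c) - (t - c')| := abs_max_sub_max_le_abs _ _ _
    _ = |c - c'| := by rw [sub_sub_sub_cancel_left, abs_sub_comm]

theorem norm_sub_posPartSub_le [PartialOrder A] [StarOrderedRing A] {a : A} (ha : 0 ≤ a)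
    {c : ℝ} (hc : 0 ≤ c) : ‖a - posPartSub a c‖ ≤ c := by
  nth_rw 1 [posPartSub, ← cfc_id' ℝ a]
  rw [← cfc_sub ..]
  refine norm_cfc_le hc fun t ht => ?_
  have ht0 : 0 ≤ t := spectrum_nonneg_of_nonneg ha ht
  rw [Real.norm_eq_abs, abs_le]
  constructor
  · linarith [max_le (by linarith : t - c ≤ t + c) (by linarith : (0 : ℝ) ≤ t + c)]
  · linarith [le_max_left (t - c) 0]

theorem mul_posPartSub {a : A} (ha : IsSelfAdjoint a) (c : ℝ) :
    a * posPartSub a c = posPartSub a c * posPartSub a c + c • posPartSub a c := by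
  simp only [posPartSub]
  nth_rw 1 [← cfc_id' ℝ a]
  rw [← cfc_mul .., ← cfc_mul .., ← cfc_smul .., ← cfc_add ..]
  refine cfc_congr fun t _ => ?_
  rcases le_total (t - c) 0 with h | h
  · simp [max_eq_right h]
  · simp only [max_eq_left h, smul_eq_mul]; ring

end CStar

section Hilbert

variable {H : Type*} [NormedAddCommGroup H] [InnerProductSpace ℂ H]

theorem sub_norm_sub_mul_norm_le_norm_apply {T C : H →L[ℂ] H} {c : ℝ} {x : H}
    (hx : c * ‖x‖ ^ 2 ≤ (⟪T x, x⟫).re) : (c - ‖T - C‖) * ‖x‖ ≤ ‖C x‖ := by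
  rcases (norm_nonneg x).eq_or_lt with hx0 | hx0
  · rw [← hx0, mul_zero]; exact norm_nonneg _
  have hTC : (⟪(T - C) x, x⟫).re ≤ ‖T - C‖ * ‖x‖ * ‖x‖ :=
    (re_inner_le_norm (𝕜 := ℂ) _ _).trans
      (mul_le_mul_of_nonneg_right ((T - C).le_opNorm x) (norm_nonneg x))
  have hC : (⟪C x, x⟫).re ≤ ‖C x‖ * ‖x‖ := re_inner_le_norm (𝕜 := ℂ) _ _
  have hsplit : (⟪T x, x⟫).re = (⟪(T - C) x, x⟫).re + (⟪C x, x⟫).re := by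
    rw [sub_apply, inner_sub_left, Complex.sub_re, sub_add_cancel]
  refine le_of_mul_le_mul_right ?_ hx0
  rw [sq] at hx
  linarith

variable [CompleteSpace H]

theorem mul_norm_sq_le_re_inner_posPartSub_apply {T : H →L[ℂ] H} (hT : IsSelfAdjoint T) (c : ℝ)
    (u : H) :
    c * ‖posPartSub T c u‖ ^ 2 ≤ (⟪T (posPartSub T c u), posPartSub T c u⟫).re := by
  set K := posPartSub T c
  have hK : K.IsPositive := (K.nonneg_iff_isPositive).1 (cfc_nonneg fun _ _ => le_max_right _ _)
  have hTK : T (K u) = K (K u) + c • K u := by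
    simpa using congr($(mul_posPartSub hT c) u)
  have hsmul : (⟪c • K u, K u⟫).re = c * ‖K u‖ ^ 2 := by
    rw [RCLike.real_smul_eq_coe_smul (K := ℂ), inner_smul_real_left, Complex.real_smul,
      Complex.re_ofReal_mul]
    exact congrArg (c * ·) (inner_self_eq_norm_sq (𝕜 := ℂ) _)
  rw [hTK, inner_add_left, Complex.add_re, hsmul]
  have hKx : 0 ≤ (⟪K (K u), K u⟫).re := hK.re_inner_nonneg_left (K u)
  linarith

theorem isCompactOperator_posPartSub {T C : H →L[ℂ] H} (hT : IsSelfAdjoint T)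
    (hC : IsCompactOperator C) {c : ℝ} (hc : ‖T - C‖ < c) :
    IsCompactOperator ⇑(posPartSub T c) := by
  have hCK : IsCompactOperator ⇑(C ∘L posPartSub T c) := hC.comp_clm _
  refine hCK.of_norm_le_mul_norm (k := (c - ‖T - C‖)⁻¹) fun u => ?_
  rw [ContinuousLinearMap.comp_apply, inv_mul_eq_div, le_div_iff₀' (sub_pos.2 hc)]
  exact sub_norm_sub_mul_norm_le_norm_apply (mul_norm_sq_le_re_inner_posPartSub_apply hT c u)

end Hilbert

theorem stmt_9_general {H : Type*} [NormedAddCommGroup H] [InnerProductSpace ℂ H] [CompleteSpace H]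
    (T : H →L[ℂ] H) (hsa : ContinuousLinearMap.adjoint T = T)
    (hpos : ∀ x : H, 0 ≤ (⟪T x, x⟫).re) :
    ∃ K : H →L[ℂ] H, IsCompactOperator ⇑K ∧ ContinuousLinearMap.adjoint K = K ∧
      (∀ x : H, 0 ≤ (⟪K x, x⟫).re) ∧
      ‖T - K‖ = Metric.infDist T {K' : H →L[ℂ] H | IsCompactOperator ⇑K'} := by
  set 𝒦 := {K' : H →L[ℂ] H | IsCompactOperator ⇑K'}
  set m := infDist T 𝒦
  have hT : 0 ≤ T := (T.nonneg_iff_isPositive).2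
    ⟨ContinuousLinearMap.isSelfAdjoint_iff_isSymmetric.1
      (ContinuousLinearMap.isSelfAdjoint_iff'.2 hsa), hpos⟩
  have hK : (posPartSub T m).IsPositive :=
    (ContinuousLinearMap.nonneg_iff_isPositive _).1 (cfc_nonneg fun _ _ => le_max_right _ _)
  have hK𝒦 : posPartSub T m ∈ 𝒦 := by
    refine isClosed_setOfPred_isCompactOperator.mem_of_tendsto (b := 𝓝[>] m)
      (((lipschitzWith_posPartSub T).continuous.tendsto m).mono_left nhdsWithin_le_nhds) ?_
    filter_upwards [self_mem_nhdsWithin] with c hc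
    obtain ⟨C, hC, hTC⟩ := (infDist_lt_iff ⟨0, isCompactOperator_zero⟩).1 hc
    exact isCompactOperator_posPartSub hT.isSelfAdjoint hC (by rwa [dist_eq_norm] at hTC)
  refine ⟨_, hK𝒦, hK.isSelfAdjoint.adjoint_eq, hK.re_inner_nonneg_left,
    le_antisymm (norm_sub_posPartSub_le hT infDist_nonneg) ?_⟩
  simpa only [dist_eq_norm] using infDist_le_dist_of_mem hK𝒦

/-- Every positive bounded operator on a separable infinite-dimensional complex Hilbert space
has a positive compact best approximant from `K(H)`. -/
theorem stmt_9 {H : Type*} [NormedAddCommGroup H] [InnerProductSpace ℂ H] [CompleteSpace H]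
    [TopologicalSpace.SeparableSpace H] (hH : ¬ FiniteDimensional ℂ H)
    (T : H →L[ℂ] H) (hsa : ContinuousLinearMap.adjoint T = T)
    (hpos : ∀ x : H, 0 ≤ (⟪T x, x⟫).re) :
    ∃ K : H →L[ℂ] H, IsCompactOperator ⇑K ∧ ContinuousLinearMap.adjoint K = K ∧
      (∀ x : H, 0 ≤ (⟪K x, x⟫).re) ∧
      ‖T - K‖ = Metric.infDist T {K' : H →L[ℂ] H | IsCompactOperator ⇑K'} :=
  stmt_9_general T hsa hpos
end

section
/- Let H be a separable infinite-dimensional complex Hilbert space and let T be a self-adjoint bounded linear operator on H. Then there exists a compact self-adjoint operator K on H such that ‖T − K‖ = d(T, K(H)). -/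
/-!
Let `d = dist(T, K(H))` and let `θ_s(x) = x - clamp_{[-s,s]}(x)` be soft thresholding at level `s`.
Then `T - θ_d(T) = clamp_{[-d,d]}(T)` has norm at most `d`, so `K = θ_d(T)` is a best approximant
as soon as it is compact. Since `‖θ_s(T) - θ_d(T)‖ ≤ s - d`, it suffices that `A = θ_s(T)` is
compact for every `s > d`. As `θ_s` vanishes on `[-s, s]`, we have `s ‖A y‖ ≤ ‖T A y‖`; choosing
a compact `C` with `c = ‖T - C‖ < s` gives `(s - c) ‖A y‖ ≤ ‖C A y‖`, so the image of the unit ball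
under `A` is totally bounded because its image under `C A` is.
-/

open ContinuousLinearMap Metric Filter Topology

def softThreshold (s x : ℝ) : ℝ := x - max (-s) (min x s)

@[fun_prop]
lemma continuous_softThreshold (s : ℝ) : Continuous (softThreshold s) := by
  unfold softThreshold; fun_prop

lemma abs_sub_softThreshold_le {s : ℝ} (hs : 0 ≤ s) (x : ℝ) : |x - softThreshold s x| ≤ s := by
  rw [softThreshold, sub_sub_cancel, abs_le]
  exact ⟨le_max_left _ _, max_le (by linarith) (min_le_right _ _)⟩

lemma abs_softThreshold_sub_softThreshold_le {d s : ℝ} (h : d ≤ s) (x : ℝ) :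
    |softThreshold s x - softThreshold d x| ≤ s - d := by
  simp only [softThreshold, abs_le, max_def, min_def]
  constructor <;> split_ifs <;> linarith

lemma sq_mul_softThreshold_le {s : ℝ} (hs : 0 ≤ s) (x : ℝ) :
    (s * softThreshold s x) ^ 2 ≤ (x * softThreshold s x) ^ 2 := by
  rw [mul_pow, mul_pow]
  rcases le_or_gt |x| s with hx | hx
  · obtain ⟨hlo, hhi⟩ := abs_le.1 hx
    simp [softThreshold, min_eq_left hhi, max_eq_right hlo]
  · exact mul_le_mul_of_nonneg_right (sq_le_sq.2 (by rw [abs_of_nonneg hs]; exact hx.le))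
      (sq_nonneg _)

lemma TotallyBounded.image_of_dist_le {X Y Z : Type*} [PseudoMetricSpace Y] [PseudoMetricSpace Z]
    {f : X → Y} {g : X → Z} {s : Set X} (hg : TotallyBounded (g '' s)) (M : ℝ)
    (h : ∀ x ∈ s, ∀ y ∈ s, dist (f x) (f y) ≤ M * dist (g x) (g y)) :
    TotallyBounded (f '' s) := by
  refine Metric.totallyBounded_iff.2 fun ε hε => ?_
  have hδ : 0 < ε / (|M| + 1) := by positivity
  obtain ⟨t, hts, htfin, hcov⟩ :=
    Set.exists_subset_image_finite_and.1 (finite_approx_of_totallyBounded hg _ hδ)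
  refine ⟨f '' t, htfin.image f, ?_⟩
  rintro _ ⟨x, hx, rfl⟩
  obtain ⟨_, ⟨y, hy, rfl⟩, hxy⟩ := Set.mem_iUnion₂.1 (hcov ⟨x, hx, rfl⟩)
  refine Set.mem_iUnion₂.2 ⟨f y, ⟨y, hy, rfl⟩, ?_⟩
  calc dist (f x) (f y) ≤ M * dist (g x) (g y) := h x hx y (hts hy)
    _ ≤ |M| * dist (g x) (g y) := by gcongr; exact le_abs_self M
    _ < (|M| + 1) * (ε / (|M| + 1)) := by gcongr; exacts [lt_add_one _, hxy]
    _ = ε := by field_simp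

lemma IsCompactOperator.of_norm_apply_le_mul {𝕜 E F G : Type*} [NontriviallyNormedField 𝕜]
    [SeminormedAddCommGroup E] [NormedSpace 𝕜 E] [NormedAddCommGroup F] [NormedSpace 𝕜 F]
    [CompleteSpace F] [NormedAddCommGroup G] [NormedSpace 𝕜 G] {A : E →L[𝕜] F} {B : E →L[𝕜] G}
    (hB : IsCompactOperator B) (M : ℝ) (h : ∀ x, ‖A x‖ ≤ M * ‖B x‖) : IsCompactOperator A := by
  refine (isCompactOperator_iff_isCompact_closure_image_closedBall (A : E →ₗ[𝕜] F) one_pos).2 ?_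
  have hBtb : TotallyBounded (B '' closedBall 0 1) :=
    (hB.isCompact_closure_image_closedBall 1).totallyBounded.subset subset_closure
  have hAtb : TotallyBounded (A '' closedBall 0 1) :=
    hBtb.image_of_dist_le M fun x _ y _ => by simpa only [dist_eq_norm, ← map_sub] using h (x - y)
  exact hAtb.closure.isCompact_of_isClosed isClosed_closure

lemma norm_apply_le_of_adjoint_comp_self_le {𝕜 E F : Type*} [RCLike 𝕜]
    [NormedAddCommGroup E] [InnerProductSpace 𝕜 E] [CompleteSpace E]
    [NormedAddCommGroup F] [InnerProductSpace 𝕜 F] [CompleteSpace F] {a b : E →L[𝕜] F}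
    (h : adjoint a ∘L a ≤ adjoint b ∘L b) (x : E) : ‖a x‖ ≤ ‖b x‖ := by
  have hpos := (RCLike.nonneg_iff.1 (((le_def _ _).1 h).inner_nonneg_left x)).1
  rw [sub_apply, inner_sub_left, map_sub, ← apply_norm_sq_eq_inner_adjoint_left,
    ← apply_norm_sq_eq_inner_adjoint_left, sub_nonneg] at hpos
  exact le_of_pow_le_pow_left₀ two_ne_zero (norm_nonneg _) hpos

lemma isCompactOperator_of_infDist_lt_of_boundedBelow {𝕜 E F G : Type*}
    [NontriviallyNormedField 𝕜] [SeminormedAddCommGroup E] [NormedSpace 𝕜 E]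
    [NormedAddCommGroup F] [NormedSpace 𝕜 F] [CompleteSpace F]
    [NormedAddCommGroup G] [NormedSpace 𝕜 G] {A : E →L[𝕜] F} {T : F →L[𝕜] G} {s : ℝ}
    (hs : infDist T {K : F →L[𝕜] G | IsCompactOperator K} < s)
    (hA : ∀ y, s * ‖A y‖ ≤ ‖T (A y)‖) : IsCompactOperator A := by
  obtain ⟨C, hC, hTC⟩ := (infDist_lt_iff ⟨0, isCompactOperator_zero⟩).1 hs
  rw [dist_eq_norm] at hTC
  refine IsCompactOperator.of_norm_apply_le_mul (B := C ∘L A) (hC.comp_clm A) (s - ‖T - C‖)⁻¹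
    fun y => ?_
  rw [le_inv_mul_iff₀ (sub_pos.2 hTC), coe_comp, Function.comp_apply]
  have hsplit : ‖T (A y)‖ ≤ ‖(T - C) (A y)‖ + ‖C (A y)‖ := by
    simpa using norm_add_le ((T - C) (A y)) (C (A y))
  linarith [hA y, (T - C).le_opNorm (A y)]

section

variable {E : Type*} [NormedAddCommGroup E] [InnerProductSpace ℂ E] [CompleteSpace E]

lemma norm_cfc_apply_le_of_sq_le {T : E →L[ℂ] E} {u v : ℝ → ℝ}
    (huv : ∀ x ∈ spectrum ℝ T, u x ^ 2 ≤ v x ^ 2) (y : E)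
    (hu : ContinuousOn u (spectrum ℝ T) := by cfc_cont_tac)
    (hv : ContinuousOn v (spectrum ℝ T) := by cfc_cont_tac) :
    ‖cfc u T y‖ ≤ ‖cfc v T y‖ := by
  apply norm_apply_le_of_adjoint_comp_self_le
  have hadj (w : ℝ → ℝ) : adjoint (cfc w T) = cfc w T := isSelfAdjoint_iff'.1 (cfc_predicate w T)
  rw [hadj, hadj, ← mul_def, ← mul_def, ← cfc_mul u u T, ← cfc_mul v v T]
  exact cfc_mono fun x hx => by simpa only [sq] using huv x hx

lemma mul_norm_cfc_softThreshold_apply_le {T : E →L[ℂ] E} (hT : IsSelfAdjoint T) {s : ℝ}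
    (hs : 0 ≤ s) (y : E) : s * ‖cfc (softThreshold s) T y‖ ≤ ‖T (cfc (softThreshold s) T y)‖ := by
  have h := norm_cfc_apply_le_of_sq_le (T := T) (u := fun x => s * softThreshold s x)
    (v := fun x => x * softThreshold s x) (fun x _ => sq_mul_softThreshold_le hs x) y
  rwa [cfc_const_mul s (softThreshold s) T, cfc_mul (fun x => x) (softThreshold s), cfc_id' ℝ T,
    smul_apply, norm_smul, Real.norm_of_nonneg hs, mul_apply_eq_comp] at h

lemma isCompactOperator_cfc_softThreshold {T : E →L[ℂ] E} (hT : IsSelfAdjoint T) {s : ℝ}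
    (hs : infDist T {K : E →L[ℂ] E | IsCompactOperator K} < s) :
    IsCompactOperator ⇑(cfc (softThreshold s) T) :=
  isCompactOperator_of_infDist_lt_of_boundedBelow hs
    (mul_norm_cfc_softThreshold_apply_le hT (infDist_nonneg.trans hs.le))

lemma tendsto_cfc_softThreshold_nhdsGT (T : E →L[ℂ] E) (d : ℝ) :
    Tendsto (fun s => cfc (softThreshold s) T) (𝓝[>] d) (𝓝 (cfc (softThreshold d) T)) := by
  rw [← tendsto_sub_nhds_zero_iff]
  refine squeeze_zero_norm' (eventually_nhdsWithin_of_forall fun s (hs : d < s) => ?_)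
    (tendsto_sub_nhds_zero_iff.2 (tendsto_nhdsWithin_of_tendsto_nhds tendsto_id))
  rw [← cfc_sub (softThreshold s) (softThreshold d) T]
  exact norm_cfc_le (sub_nonneg.2 hs.le) fun x _ => abs_softThreshold_sub_softThreshold_le hs.le x

end

theorem stmt_10_general {H : Type*} [NormedAddCommGroup H] [InnerProductSpace ℂ H] [CompleteSpace H]
    (T : H →L[ℂ] H) (hsa : ContinuousLinearMap.adjoint T = T) :
    ∃ K : H →L[ℂ] H, IsCompactOperator ⇑K ∧ ContinuousLinearMap.adjoint K = K ∧
      ‖T - K‖ = Metric.infDist T {K' : H →L[ℂ] H | IsCompactOperator ⇑K'} := by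
  have hT : IsSelfAdjoint T := isSelfAdjoint_iff'.2 hsa
  set d := infDist T {K' : H →L[ℂ] H | IsCompactOperator K'}
  have hd : 0 ≤ d := infDist_nonneg
  have hK : IsCompactOperator ⇑(cfc (softThreshold d) T) :=
    isCompactOperator_of_tendsto (tendsto_cfc_softThreshold_nhdsGT T d)
      (eventually_nhdsWithin_of_forall fun s hs => isCompactOperator_cfc_softThreshold hT hs)
  refine ⟨_, hK, isSelfAdjoint_iff'.1 (cfc_predicate _ T), le_antisymm ?_ ?_⟩
  · calc ‖T - cfc (softThreshold d) T‖ = ‖cfc (fun x => x - softThreshold d x) T‖ := by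
          rw [cfc_sub (fun x => x) (softThreshold d) T, cfc_id' ℝ T]
      _ ≤ d := norm_cfc_le hd fun x _ => abs_sub_softThreshold_le hd x
  · rw [← dist_eq_norm]
    exact infDist_le_dist_of_mem hK

/-- Every self-adjoint bounded operator on a separable infinite-dimensional complex Hilbert
space has a self-adjoint compact best approximant from `K(H)`. -/
theorem stmt_10 {H : Type*} [NormedAddCommGroup H] [InnerProductSpace ℂ H] [CompleteSpace H]
    [TopologicalSpace.SeparableSpace H] (hH : ¬ FiniteDimensional ℂ H)
    (T : H →L[ℂ] H) (hsa : ContinuousLinearMap.adjoint T = T) :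
    ∃ K : H →L[ℂ] H, IsCompactOperator ⇑K ∧ ContinuousLinearMap.adjoint K = K ∧
      ‖T - K‖ = Metric.infDist T {K' : H →L[ℂ] H | IsCompactOperator ⇑K'} :=
  stmt_10_general T hsa
end

section
/- Let H be a separable infinite-dimensional complex Hilbert space and let T be a positive bounded linear operator on H with ‖T‖ ≥ 1. Then there exists a compact positive operator K on H with ‖K‖ ≤ 1 such that ‖T − K‖ = d(T, B_{K(H)}). -/
/-!
Let `m = d(T, B_{K(H)})` and `K = f_m(T)` with `f_m = shiftedClamp m`. Since every
element of `B_{K(H)}` has norm at most `1`, `‖T‖ ≤ m + 1`, so `|t - f_m(t)| ≤ m` on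
`σ(T) ⊆ [0, ‖T‖]` and `‖T - K‖ ≤ m`; as `K` is a positive contraction, equality holds once `K` is
compact. For `c > m` pick a compact `C` with `‖T - C‖ < c`. If `g` vanishes on `(-∞, c]`, then
`g(T) (T - c) g(T) ≥ 0`, so `re ⟪T v, v⟫ ≥ c ‖v‖²` on the range of `g(T)`; there `C` is bounded
below by `c - ‖T - C‖ > 0`, which for a compact operator forces the range to be finite
dimensional. Hence each `f_{m + 1/(n+1)}(T)` has finite rank, and `K` is their norm limit.
-/

open Filter
open scoped InnerProductSpace ComplexInnerProductSpace

theorem FiniteDimensional.of_isCompactOperator_of_le_norm {𝕜 E F : Type*}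
    [NontriviallyNormedField 𝕜] [CompleteSpace 𝕜]
    [NormedAddCommGroup E] [NormedSpace 𝕜 E] [NormedAddCommGroup F] [NormedSpace 𝕜 F]
    {C : E →L[𝕜] F} (hC : IsCompactOperator C) (V : Submodule 𝕜 E) {δ : ℝ} (hδ : 0 < δ)
    (hV : ∀ v ∈ V, δ * ‖v‖ ≤ ‖C v‖) : FiniteDimensional 𝕜 V := by
  set CV : V →L[𝕜] F := C.comp V.subtypeL
  have hanti : AntilipschitzWith (Real.toNNReal δ⁻¹) CV :=
    CV.antilipschitz_of_bound fun v => by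
      rw [Real.coe_toNNReal _ (inv_nonneg.2 hδ.le), inv_mul_eq_div, le_div_iff₀' hδ]
      exact hV v v.2
  have htb : TotallyBounded (C '' Metric.closedBall 0 1) :=
    (hC.isCompact_closure_image_closedBall 1).totallyBounded.subset subset_closure
  refine .of_totallyBounded_nhds_zero 𝕜 (Metric.closedBall_mem_nhds (0 : V) one_pos)
    ((totallyBounded_preimage (hanti.isUniformInducing CV.uniformContinuous) htb).subset ?_)
  exact fun v hv => ⟨v, by simpa using hv, rfl⟩

theorem ContinuousLinearMap.isCompactOperator_of_finiteDimensional_range {𝕜 E F : Type*}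
    [NontriviallyNormedField 𝕜] [CompleteSpace 𝕜] [LocallyCompactSpace 𝕜]
    [NormedAddCommGroup E] [NormedSpace 𝕜 E] [NormedAddCommGroup F] [NormedSpace 𝕜 F]
    (f : E →L[𝕜] F) [FiniteDimensional 𝕜 (LinearMap.range (f : E →ₗ[𝕜] F))] :
    IsCompactOperator f := by
  have hid : IsCompactOperator (id : LinearMap.range (f : E →ₗ[𝕜] F) → _) :=
    isCompactOperator_id_iff_finiteDimensional.2 ‹_›
  exact (hid.comp_clm f.rangeRestrict).clm_comp (LinearMap.range (f : E →ₗ[𝕜] F)).subtypeL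

theorem ContinuousLinearMap.sub_norm_sub_mul_norm_le_of_le_re_inner {𝕜 E : Type*} [RCLike 𝕜]
    [NormedAddCommGroup E] [InnerProductSpace 𝕜 E] (T C : E →L[𝕜] E) {c : ℝ} {v : E}
    (hv : c * ‖v‖ ^ 2 ≤ RCLike.re ⟪T v, v⟫_𝕜) :
    (c - ‖T - C‖) * ‖v‖ ≤ ‖C v‖ := by
  have hsplit : RCLike.re ⟪T v, v⟫_𝕜
      = RCLike.re ⟪(T - C) v, v⟫_𝕜 + RCLike.re ⟪C v, v⟫_𝕜 := by
    simp [inner_sub_left]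
  have hTC : RCLike.re ⟪(T - C) v, v⟫_𝕜 ≤ ‖T - C‖ * ‖v‖ * ‖v‖ :=
    (re_inner_le_norm _ _).trans (mul_le_mul_of_nonneg_right ((T - C).le_opNorm v) (norm_nonneg v))
  have hC : RCLike.re ⟪C v, v⟫_𝕜 ≤ ‖C v‖ * ‖v‖ := re_inner_le_norm _ _
  rcases (norm_nonneg v).eq_or_lt with hv0 | hv0
  · rw [← hv0, mul_zero]
    exact norm_nonneg _
  · refine le_of_mul_le_mul_right ?_ hv0
    nlinarith

def shiftedClamp (m t : ℝ) : ℝ := min (max (t - m) 0) 1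

theorem continuous_shiftedClamp (m : ℝ) : Continuous (shiftedClamp m) := by
  unfold shiftedClamp
  fun_prop

theorem shiftedClamp_nonneg (m t : ℝ) : 0 ≤ shiftedClamp m t :=
  le_min (le_max_right _ _) zero_le_one

theorem shiftedClamp_le_one (m t : ℝ) : shiftedClamp m t ≤ 1 :=
  min_le_right _ _

theorem shiftedClamp_of_le {m t : ℝ} (h : t ≤ m) : shiftedClamp m t = 0 := by
  rw [shiftedClamp, max_eq_right (by linarith), min_eq_left zero_le_one]

theorem abs_shiftedClamp_sub_shiftedClamp_le (m m' t : ℝ) :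
    |shiftedClamp m t - shiftedClamp m' t| ≤ |m - m'| := by
  unfold shiftedClamp
  grind

theorem abs_sub_shiftedClamp_le {m t : ℝ} (hm : 0 ≤ m) (ht₀ : 0 ≤ t) (ht : t ≤ m + 1) :
    |t - shiftedClamp m t| ≤ m := by
  unfold shiftedClamp
  grind

section

variable {H : Type*} [NormedAddCommGroup H] [InnerProductSpace ℂ H] [CompleteSpace H]

theorem IsSelfAdjoint.mul_norm_sq_le_re_inner_cfc_apply {T : H →L[ℂ] H} (hT : IsSelfAdjoint T)
    {c : ℝ} {g : ℝ → ℝ} (hg : ContinuousOn g (spectrum ℝ T))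
    (hgc : ∀ t ∈ spectrum ℝ T, t ≤ c → g t = 0) (x : H) :
    c * ‖cfc g T x‖ ^ 2 ≤ RCLike.re ⟪T (cfc g T x), cfc g T x⟫ := by
  set A := cfc g T
  have hA : (A : H →ₗ[ℂ] H).IsSymmetric :=
    ContinuousLinearMap.isSelfAdjoint_iff_isSymmetric.1 (cfc_predicate g T)
  have hconj : 0 ≤ A * (T - algebraMap ℝ _ c) * A := by
    rw [← cfc_id' ℝ T, ← cfc_const c T, ← cfc_sub .., ← cfc_mul .., ← cfc_mul ..]
    refine cfc_nonneg fun t ht => ?_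
    rcases le_total t c with htc | htc
    · simp [hgc t ht htc]
    · nlinarith [mul_self_nonneg (g t)]
  have := ((ContinuousLinearMap.nonneg_iff_isPositive _).1 hconj).re_inner_nonneg_left x
  rw [show (A * (T - algebraMap ℝ _ c) * A) x = A (T (A x) - (c : ℂ) • A x) by
      simp [Algebra.algebraMap_eq_smul_one], ← ContinuousLinearMap.coe_coe, hA,
    ContinuousLinearMap.coe_coe, inner_sub_left, map_sub] at this
  have hc : RCLike.re ⟪(c : ℂ) • A x, A x⟫ = c * ‖A x‖ ^ 2 := by
    simp only [inner_smul_left, Complex.conj_ofReal, RCLike.re_to_complex, Complex.re_ofReal_mul]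
    rw [← RCLike.re_to_complex, inner_self_eq_norm_sq]
  linarith

theorem IsSelfAdjoint.isCompactOperator_cfc_of_norm_sub_lt {T C : H →L[ℂ] H}
    (hT : IsSelfAdjoint T) (hC : IsCompactOperator C) {c : ℝ} (hTC : ‖T - C‖ < c) {g : ℝ → ℝ}
    (hg : ContinuousOn g (spectrum ℝ T)) (hgc : ∀ t ∈ spectrum ℝ T, t ≤ c → g t = 0) :
    IsCompactOperator (cfc g T : H →L[ℂ] H) := by
  have hbelow : ∀ v ∈ LinearMap.range ((cfc g T : H →L[ℂ] H) : H →ₗ[ℂ] H),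
      (c - ‖T - C‖) * ‖v‖ ≤ ‖C v‖ := by
    rintro _ ⟨x, rfl⟩
    exact T.sub_norm_sub_mul_norm_le_of_le_re_inner C
      (hT.mul_norm_sq_le_re_inner_cfc_apply hg hgc x)
  have := FiniteDimensional.of_isCompactOperator_of_le_norm hC _ (sub_pos.2 hTC) hbelow
  exact (cfc g T : H →L[ℂ] H).isCompactOperator_of_finiteDimensional_range

theorem IsSelfAdjoint.isCompactOperator_cfc_shiftedClamp {T : H →L[ℂ] H} (hT : IsSelfAdjoint T)
    {m : ℝ} (hm : ∀ c > m, ∃ C : H →L[ℂ] H, IsCompactOperator C ∧ ‖T - C‖ < c) :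
    IsCompactOperator (cfc (shiftedClamp m) T : H →L[ℂ] H) := by
  refine isCompactOperator_of_tendsto (l := atTop)
    (F := fun n : ℕ => cfc (shiftedClamp (m + 1 / (n + 1))) T) ?_ (.of_forall fun n => ?_)
  · rw [tendsto_iff_norm_sub_tendsto_zero]
    refine squeeze_zero (fun _ => norm_nonneg _) (fun n => ?_)
      tendsto_one_div_add_atTop_nhds_zero_nat
    rw [← cfc_sub (hf := (continuous_shiftedClamp _).continuousOn)
      (hg := (continuous_shiftedClamp _).continuousOn)]
    refine norm_cfc_le (by positivity) fun t _ => ?_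
    refine (abs_shiftedClamp_sub_shiftedClamp_le _ m t).trans_eq ?_
    rw [add_sub_cancel_left, abs_of_pos Nat.one_div_pos_of_nat]
  · obtain ⟨C, hC, hTC⟩ := hm (m + 1 / (n + 1)) (lt_add_of_pos_right m Nat.one_div_pos_of_nat)
    exact hT.isCompactOperator_cfc_of_norm_sub_lt hC hTC (continuous_shiftedClamp _).continuousOn
      fun t _ ht => shiftedClamp_of_le ht

theorem norm_sub_cfc_shiftedClamp_le {T : H →L[ℂ] H} (hT : 0 ≤ T) {m : ℝ} (hm₀ : 0 ≤ m)
    (hm : ‖T‖ - 1 ≤ m) : ‖T - cfc (shiftedClamp m) T‖ ≤ m := by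
  have hsub : T - cfc (shiftedClamp m) T = cfc (fun t => t - shiftedClamp m t) T := by
    rw [cfc_sub (fun t => t) (shiftedClamp m) T (hg := (continuous_shiftedClamp m).continuousOn),
      cfc_id' ℝ T]
  rw [hsub]
  refine norm_cfc_le hm₀ fun t ht =>
    abs_sub_shiftedClamp_le hm₀ (spectrum_nonneg_of_nonneg hT ht) ?_
  have ht_le : ‖t‖ ≤ ‖T‖ := by simpa [cfc_id ℝ T] using norm_apply_le_norm_cfc id T ht
  linarith [le_abs_self t, Real.norm_eq_abs t]

end

theorem stmt_11_general {H : Type*} [NormedAddCommGroup H] [InnerProductSpace ℂ H] [CompleteSpace H]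
    (T : H →L[ℂ] H) (hsa : ContinuousLinearMap.adjoint T = T)
    (hpos : ∀ x : H, 0 ≤ (⟪T x, x⟫).re) :
    ∃ K : H →L[ℂ] H, IsCompactOperator ⇑K ∧ ContinuousLinearMap.adjoint K = K ∧
      (∀ x : H, 0 ≤ (⟪K x, x⟫).re) ∧ ‖K‖ ≤ 1 ∧
      ‖T - K‖ = Metric.infDist T {K' : H →L[ℂ] H | IsCompactOperator ⇑K' ∧ ‖K'‖ ≤ 1} := by
  set S := {K' : H →L[ℂ] H | IsCompactOperator ⇑K' ∧ ‖K'‖ ≤ 1}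
  set m := Metric.infDist T S
  have hS : S.Nonempty := ⟨0, isCompactOperator_zero, by simp⟩
  have hT : 0 ≤ T := (ContinuousLinearMap.nonneg_iff_isPositive T).2
    (ContinuousLinearMap.isPositive_def'.2 ⟨hsa, hpos⟩)
  have hm : ‖T‖ - 1 ≤ m := (Metric.le_infDist hS).2 fun K hK => by
    rw [dist_eq_norm]
    linarith [norm_sub_norm_le T K, hK.2]
  set K : H →L[ℂ] H := cfc (shiftedClamp m) T
  have hK : IsCompactOperator K :=
    hT.isSelfAdjoint.isCompactOperator_cfc_shiftedClamp fun c hc => by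
      obtain ⟨C, hC, hTC⟩ := (Metric.infDist_lt_iff hS).1 hc
      exact ⟨C, hC.1, by rwa [← dist_eq_norm]⟩
  have hK₁ : ‖K‖ ≤ 1 := norm_cfc_le zero_le_one fun t _ =>
    (abs_of_nonneg (shiftedClamp_nonneg m t)).trans_le (shiftedClamp_le_one m t)
  have hK₀ : K.IsPositive :=
    (ContinuousLinearMap.nonneg_iff_isPositive K).1 (cfc_nonneg fun t _ => shiftedClamp_nonneg m t)
  refine ⟨K, hK, hK₀.isSelfAdjoint.adjoint_eq, hK₀.re_inner_nonneg_left, hK₁,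
    le_antisymm (norm_sub_cfc_shiftedClamp_le hT Metric.infDist_nonneg hm) ?_⟩
  rw [← dist_eq_norm]
  exact Metric.infDist_le_dist_of_mem ⟨hK, hK₁⟩

/-- Every positive bounded operator `T` with `‖T‖ ≥ 1` on a separable infinite-dimensional
complex Hilbert space has a positive compact best approximant from the closed unit ball of
`K(H)`. -/
theorem stmt_11 {H : Type*} [NormedAddCommGroup H] [InnerProductSpace ℂ H] [CompleteSpace H]
    [TopologicalSpace.SeparableSpace H] (hH : ¬ FiniteDimensional ℂ H)
    (T : H →L[ℂ] H) (hsa : ContinuousLinearMap.adjoint T = T)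
    (hpos : ∀ x : H, 0 ≤ (⟪T x, x⟫).re) (hT : 1 ≤ ‖T‖) :
    ∃ K : H →L[ℂ] H, IsCompactOperator ⇑K ∧ ContinuousLinearMap.adjoint K = K ∧
      (∀ x : H, 0 ≤ (⟪K x, x⟫).re) ∧ ‖K‖ ≤ 1 ∧
      ‖T - K‖ = Metric.infDist T {K' : H →L[ℂ] H | IsCompactOperator ⇑K' ∧ ‖K'‖ ≤ 1} :=
  stmt_11_general T hsa hpos
end

section
/- Let ℓ₁ be the Banach space of absolutely summable complex sequences. Then K(ℓ₁) is ball proximinal in B(ℓ₁): for every bounded linear operator T on ℓ₁ there exists a compact operator K on ℓ₁ with ‖K‖ ≤ 1 such that ‖T − K‖ = d(T, B_{K(ℓ₁)}); moreover d(T, B_{K(ℓ₁)}) = max{ ‖T‖ − 1, d(T, K(ℓ₁)) }. -/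
/-!
Write `D = d(T, K(ℓ₁))` and `c j = T eⱼ` for the columns of `T`. The norm of an operator on `ℓ₁`
is the supremum of the norms of its columns; a compact operator has columns with uniformly small
tails, and uniformly small column tails make an operator a norm limit of finite-rank truncations.
Scaling down the coordinates of `c j` so that each tail norm `τₙ` becomes `(τₙ - tⱼ)⁺`, with
`tⱼ = max D (‖c j‖ - 1)`, gives a column of norm at most `1` at distance at most
`tⱼ ≤ max (‖T‖ - 1) D` from `c j`. Since the column tails of `T` are eventually uniformly below
`D + ε`, the new columns have uniformly small tails, so they form a compact `K` in the unit ball,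
which attains the elementary lower bound `max (‖T‖ - 1) D` for `d(T, B_{K(ℓ₁)})`.
-/

open Filter Topology Finset Metric
open scoped lp

theorem Metric.infDist_sep_norm_le_eq_max {G : Type*} [SeminormedAddCommGroup G] {s : Set G}
    {r : ℝ} {x y : G} (hy : y ∈ s) (hyr : ‖y‖ ≤ r)
    (hxy : ‖x - y‖ ≤ max (‖x‖ - r) (infDist x s)) :
    ‖x - y‖ = infDist x {z ∈ s | ‖z‖ ≤ r} ∧
      infDist x {z ∈ s | ‖z‖ ≤ r} = max (‖x‖ - r) (infDist x s) := by
  have hne : {z ∈ s | ‖z‖ ≤ r}.Nonempty := ⟨y, hy, hyr⟩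
  have hlower : max (‖x‖ - r) (infDist x s) ≤ infDist x {z ∈ s | ‖z‖ ≤ r} := by
    refine max_le ((le_infDist hne).mpr fun z hz => ?_)
      (infDist_le_infDist_of_subset (fun z hz => hz.1) hne)
    rw [dist_eq_norm]
    linarith [norm_sub_norm_le x z, hz.2]
  have hupper : infDist x {z ∈ s | ‖z‖ ≤ r} ≤ ‖x - y‖ := by
    simpa [dist_eq_norm] using
      infDist_le_dist_of_mem (x := x) (⟨hy, hyr⟩ : y ∈ {z ∈ s | ‖z‖ ≤ r})
  exact ⟨le_antisymm (hxy.trans hlower) hupper, le_antisymm (hupper.trans hxy) hlower⟩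

namespace lp

section TailNorm

variable {E : ℕ → Type*} [∀ i, NormedAddCommGroup (E i)]

lemma hasSum_norm_one (x : lp E 1) : HasSum (fun i => ‖x i‖) ‖x‖ := by
  simpa using lp.hasSum_norm (p := 1) (by simp) x

noncomputable def tailNorm (x : lp E 1) (n : ℕ) : ℝ := ‖x - ∑ i ∈ range n, lp.single 1 i (x i)‖

lemma tailNorm_eq (x : lp E 1) (n : ℕ) : tailNorm x n = ‖x‖ - ∑ i ∈ range n, ‖x i‖ := by
  rw [tailNorm]
  simpa using lp.norm_compl_sum_single (p := 1) (by simp) x (range n)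

@[simp]
lemma tailNorm_zero (x : lp E 1) : tailNorm x 0 = ‖x‖ := by
  simp [tailNorm_eq]

lemma tailNorm_succ (x : lp E 1) (n : ℕ) : tailNorm x (n + 1) = tailNorm x n - ‖x n‖ := by
  simp only [tailNorm_eq, sum_range_succ]
  ring

lemma antitone_tailNorm (x : lp E 1) : Antitone (tailNorm x) :=
  antitone_nat_of_succ_le fun n => by simp [tailNorm_succ]

lemma tailNorm_le_norm (x : lp E 1) (n : ℕ) : tailNorm x n ≤ ‖x‖ := by
  simpa using antitone_tailNorm x n.zero_le

lemma tendsto_tailNorm (x : lp E 1) : Tendsto (tailNorm x) atTop (𝓝 0) := by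
  rw [funext (tailNorm_eq x)]
  simpa using (hasSum_norm_one x).tendsto_sum_nat.const_sub ‖x‖

lemma tailNorm_le_add_norm_sub (x y : lp E 1) (n : ℕ) :
    tailNorm x n ≤ tailNorm y n + ‖x - y‖ := by
  have hsplit : x - ∑ i ∈ range n, lp.single 1 i (x i) =
      (y - ∑ i ∈ range n, lp.single 1 i (y i)) +
        ((x - y) - ∑ i ∈ range n, lp.single 1 i ((x - y) i)) := by
    simp only [coeFn_sub, Pi.sub_apply, lp.single_sub, sum_sub_distrib]
    abel
  calc tailNorm x n ≤ tailNorm y n + tailNorm (x - y) n := by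
        rw [tailNorm, hsplit]; exact norm_add_le _ _
    _ ≤ tailNorm y n + ‖x - y‖ := by gcongr; exact tailNorm_le_norm _ n

lemma lipschitzWith_tailNorm (n : ℕ) : LipschitzWith 1 (tailNorm (E := E) · n) :=
  LipschitzWith.of_le_add fun x y => by
    simpa [dist_eq_norm] using tailNorm_le_add_norm_sub x y n

lemma exists_tailNorm_le_of_isCompact {s : Set (lp E 1)} (hs : IsCompact s) {ε : ℝ}
    (hε : 0 < ε) : ∃ n, ∀ x ∈ s, tailNorm x n ≤ ε := by
  have hunif : TendstoUniformlyOn (fun n x => tailNorm x n) 0 atTop s :=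
    Antitone.tendstoUniformlyOn_of_forall_tendsto hs
      (fun n => (lipschitzWith_tailNorm n).continuous.continuousOn)
      (fun x _ => antitone_tailNorm x) continuousOn_const (fun x _ => tendsto_tailNorm x)
  obtain ⟨n, hn⟩ := (Metric.tendstoUniformlyOn_iff.mp hunif ε hε).exists
  refine ⟨n, fun x hx => ?_⟩
  have := hn x hx
  rw [Pi.zero_apply, dist_zero_left] at this
  exact (Real.le_norm_self _).trans this.le

noncomputable def tailExcess (x : lp E 1) (t : ℝ) (n : ℕ) : ℝ := max (tailNorm x n - t) 0

lemma tailExcess_succ_le (x : lp E 1) (t : ℝ) (n : ℕ) :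
    tailExcess x t (n + 1) ≤ tailExcess x t n := by
  unfold tailExcess
  gcongr
  exact antitone_tailNorm x n.le_succ

lemma tailExcess_sub_succ_le (x : lp E 1) (t : ℝ) (n : ℕ) :
    tailExcess x t n - tailExcess x t (n + 1) ≤ ‖x n‖ := by
  have hstep : tailNorm x n - t - (tailNorm x (n + 1) - t) = ‖x n‖ := by
    rw [tailNorm_succ]; ring
  have h := abs_max_sub_max_le_abs (tailNorm x n - t) (tailNorm x (n + 1) - t) 0
  rw [hstep, abs_norm] at h
  exact (le_abs_self _).trans h

lemma tendsto_tailExcess (x : lp E 1) {t : ℝ} (ht : 0 ≤ t) :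
    Tendsto (tailExcess x t) atTop (𝓝 0) := by
  show Tendsto (fun n => max (tailNorm x n - t) 0) atTop (𝓝 0)
  simpa [max_eq_right (neg_nonpos.mpr ht)] using
    ((tendsto_tailNorm x).sub_const t).max (tendsto_const_nhds (x := 0))

end TailNorm

section TailCut

variable {E : ℕ → Type*} [∀ i, NormedAddCommGroup (E i)] [∀ i, NormedSpace ℝ (E i)]

/-- Each coordinate of `x` is scaled by a factor in `[0, 1]` so that the result has
tails exactly `tailExcess x t`. -/
noncomputable def tailCutFun (x : lp E 1) (t : ℝ) (n : ℕ) : E n :=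
  ((tailExcess x t n - tailExcess x t (n + 1)) / ‖x n‖) • x n

lemma norm_tailCutFun (x : lp E 1) (t : ℝ) (n : ℕ) :
    ‖tailCutFun x t n‖ = tailExcess x t n - tailExcess x t (n + 1) := by
  have hdiff := sub_nonneg.mpr (tailExcess_succ_le x t n)
  rw [tailCutFun, norm_smul_of_nonneg (div_nonneg hdiff (norm_nonneg _))]
  rcases eq_or_ne ‖x n‖ 0 with h | h
  · have := tailExcess_sub_succ_le x t n
    rw [h] at this ⊢
    linarith
  · exact div_mul_cancel₀ _ h

lemma norm_sub_tailCutFun (x : lp E 1) (t : ℝ) (n : ℕ) :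
    ‖x n - tailCutFun x t n‖ = ‖x n‖ - ‖tailCutFun x t n‖ := by
  set r := (tailExcess x t n - tailExcess x t (n + 1)) / ‖x n‖
  have hr0 : 0 ≤ r := div_nonneg (sub_nonneg.mpr (tailExcess_succ_le x t n)) (norm_nonneg _)
  have hr1 : r ≤ 1 := div_le_one_of_le₀ (tailExcess_sub_succ_le x t n) (norm_nonneg _)
  have hsub : x n - r • x n = (1 - r) • x n := by rw [sub_smul, one_smul]
  rw [tailCutFun, hsub, norm_smul_of_nonneg (sub_nonneg.mpr hr1), norm_smul_of_nonneg hr0]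
  ring

noncomputable def tailCut (x : lp E 1) (t : ℝ) : lp E 1 :=
  ⟨tailCutFun x t, (lp.memℓp x).mono' fun n => by
    rw [norm_tailCutFun]; exact tailExcess_sub_succ_le x t n⟩

lemma tailCut_apply (x : lp E 1) (t : ℝ) (n : ℕ) : tailCut x t n = tailCutFun x t n := rfl

lemma norm_tailCut (x : lp E 1) {t : ℝ} (ht : 0 ≤ t) : ‖tailCut x t‖ = tailExcess x t 0 := by
  refine (hasSum_norm_one (tailCut x t)).unique ?_
  simp only [tailCut_apply, norm_tailCutFun]
  rw [hasSum_iff_tendsto_nat_of_nonneg fun n => sub_nonneg.mpr (tailExcess_succ_le x t n)]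
  simp only [sum_range_sub']
  simpa using (tendsto_tailExcess x ht).const_sub (tailExcess x t 0)

lemma tailNorm_tailCut (x : lp E 1) {t : ℝ} (ht : 0 ≤ t) (n : ℕ) :
    tailNorm (tailCut x t) n = max (tailNorm x n - t) 0 := by
  rw [tailNorm_eq, norm_tailCut x ht]
  simp only [tailCut_apply, norm_tailCutFun, sum_range_sub', sub_sub_cancel]
  rfl

lemma norm_sub_tailCut_le (x : lp E 1) {t : ℝ} (ht : 0 ≤ t) : ‖x - tailCut x t‖ ≤ t := by
  have hsum : HasSum (fun n => ‖(x - tailCut x t) n‖) (‖x‖ - ‖tailCut x t‖) := by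
    simp only [coeFn_sub, Pi.sub_apply, tailCut_apply, norm_sub_tailCutFun]
    exact (hasSum_norm_one x).sub (hasSum_norm_one (tailCut x t))
  rw [(hasSum_norm_one _).unique hsum, norm_tailCut x ht, tailExcess, tailNorm_zero]
  linarith [le_max_left (‖x‖ - t) 0]

end TailCut

section Operators

variable {𝕜 : Type*} [RCLike 𝕜] {F : Type*} [NormedAddCommGroup F] [NormedSpace 𝕜 F]

lemma hasSum_smul_single_one (x : ℓ¹(ℕ, 𝕜)) :
    HasSum (fun j => x j • lp.single 1 j (1 : 𝕜)) x := by
  simpa [← lp.single_smul] using lp.hasSum_single (p := 1) (by simp) x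

lemma opNorm_le_of_forall_norm_apply_single_le (S : ℓ¹(ℕ, 𝕜) →L[𝕜] F) {C : ℝ} (hC : 0 ≤ C)
    (h : ∀ j, ‖S (lp.single 1 j 1)‖ ≤ C) : ‖S‖ ≤ C := by
  refine S.opNorm_le_bound hC fun x => ?_
  rw [mul_comm]
  refine ((hasSum_smul_single_one x).mapL S).norm_le_of_bounded
    ((hasSum_norm_one x).mul_right C) fun j => ?_
  rw [map_smul, norm_smul]
  exact mul_le_mul_of_nonneg_left (h j) (norm_nonneg _)

lemma norm_apply_single_le_opNorm (S : ℓ¹(ℕ, 𝕜) →L[𝕜] F) (j : ℕ) :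
    ‖S (lp.single 1 j 1)‖ ≤ ‖S‖ := by
  simpa [lp.norm_single] using S.le_opNorm (lp.single 1 j 1)

variable [CompleteSpace F] {k : ℕ → F} {M : ℝ}

lemma summable_smul_of_norm_le (hk : ∀ j, ‖k j‖ ≤ M) (x : ℓ¹(ℕ, 𝕜)) :
    Summable fun j => x j • k j :=
  .of_norm_bounded ((hasSum_norm_one x).summable.mul_right M) fun j => by
    rw [norm_smul]; exact mul_le_mul_of_nonneg_left (hk j) (norm_nonneg _)

noncomputable def ofColumns (k : ℕ → F) (hk : ∀ j, ‖k j‖ ≤ M) : ℓ¹(ℕ, 𝕜) →L[𝕜] F :=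
  LinearMap.mkContinuous
    { toFun := fun x => ∑' j, x j • k j
      map_add' := fun x y => by
        simp only [coeFn_add, Pi.add_apply, add_smul]
        exact (summable_smul_of_norm_le hk x).tsum_add (summable_smul_of_norm_le hk y)
      map_smul' := fun c x => by
        simp only [coeFn_smul, Pi.smul_apply, smul_eq_mul, mul_smul, RingHom.id_apply]
        exact (summable_smul_of_norm_le hk x).tsum_const_smul c }
    M fun x => by
      rw [mul_comm]
      refine (summable_smul_of_norm_le hk x).hasSum.norm_le_of_bounded
        ((hasSum_norm_one x).mul_right M) fun j => ?_
      rw [norm_smul]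
      exact mul_le_mul_of_nonneg_left (hk j) (norm_nonneg _)

lemma ofColumns_apply_single (hk : ∀ j, ‖k j‖ ≤ M) (j : ℕ) :
    ofColumns k hk (lp.single 1 j (1 : 𝕜)) = k j := by
  refine (tsum_eq_single j fun i hij => ?_).trans ?_
  · simp [lp.single_apply, hij]
  · simp

lemma norm_ofColumns_le (hk : ∀ j, ‖k j‖ ≤ M) : ‖ofColumns (𝕜 := 𝕜) k hk‖ ≤ M :=
  opNorm_le_of_forall_norm_apply_single_le _ ((norm_nonneg _).trans (hk 0)) fun j => by
    rw [ofColumns_apply_single]; exact hk j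

end Operators

end lp

section CompactOperators

open lp

variable {𝕜 : Type*}

theorem IsCompactOperator.exists_tailNorm_apply_le [NontriviallyNormedField 𝕜]
    {X : Type*} [NormedAddCommGroup X] [NormedSpace 𝕜 X]
    {E : ℕ → Type*} [∀ i, NormedAddCommGroup (E i)] [∀ i, NormedSpace 𝕜 (E i)]
    {S : X →L[𝕜] lp E 1} (hS : IsCompactOperator S) {ε : ℝ} (hε : 0 < ε) :
    ∃ n, ∀ x, ‖x‖ ≤ 1 → tailNorm (S x) n ≤ ε := by
  obtain ⟨C, hC, hSC⟩ := hS.image_closedBall_subset_compact (f := (S : X →ₗ[𝕜] lp E 1)) 1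
  obtain ⟨n, hn⟩ := exists_tailNorm_le_of_isCompact hC hε
  exact ⟨n, fun x hx => hn _ (hSC ⟨x, mem_closedBall_zero_iff.mpr hx, rfl⟩)⟩

theorem isCompactOperator_of_forall_tailNorm_apply_single_le [RCLike 𝕜]
    (S : ℓ¹(ℕ, 𝕜) →L[𝕜] ℓ¹(ℕ, 𝕜))
    (h : ∀ ε > 0, ∃ n, ∀ j, tailNorm (S (lp.single 1 j 1)) n ≤ ε) : IsCompactOperator S := by
  refine isClosed_setOfPred_isCompactOperator.closure_subset (Metric.mem_closure_iff.mpr ?_)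
  intro ε hε
  obtain ⟨n, hn⟩ := h (ε / 2) (half_pos hε)
  set P : ℓ¹(ℕ, 𝕜) →L[𝕜] ℓ¹(ℕ, 𝕜) := ∑ i ∈ range n,
    (singleContinuousLinearMap 𝕜 (fun _ => 𝕜) 1 i).comp (evalCLM 𝕜 (fun _ => 𝕜) 1 i)
  have hP : IsCompactOperator P := by
    refine Submodule.sum_mem (compactOperator (RingHom.id 𝕜) _ _) fun i _ => ?_
    exact (isCompactOperator_of_locallyCompactSpace_dom (evalCLM 𝕜 (fun _ => 𝕜) 1 i)).clm_comp
      (singleContinuousLinearMap 𝕜 (fun _ => 𝕜) 1 i)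
  refine ⟨P.comp S, hP.comp_clm S, ?_⟩
  rw [dist_eq_norm]
  refine (opNorm_le_of_forall_norm_apply_single_le _ (half_pos hε).le fun j => ?_).trans_lt
    (half_lt_self hε)
  simpa [P, tailNorm, evalCLM] using hn j

end CompactOperators

section BallProximinal

open lp

variable {𝕜 : Type*} [RCLike 𝕜]

theorem exists_tailNorm_apply_single_lt_infDist_add (T : ℓ¹(ℕ, 𝕜) →L[𝕜] ℓ¹(ℕ, 𝕜)) {ε : ℝ}
    (hε : 0 < ε) : ∃ n, ∀ j, tailNorm (T (lp.single 1 j 1)) n <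
      infDist T {S : ℓ¹(ℕ, 𝕜) →L[𝕜] ℓ¹(ℕ, 𝕜) | IsCompactOperator S} + ε := by
  obtain ⟨S, hS, hTS⟩ := (infDist_lt_iff ⟨0, isCompactOperator_zero⟩).mp
    (lt_add_of_pos_right (infDist T {S : ℓ¹(ℕ, 𝕜) →L[𝕜] ℓ¹(ℕ, 𝕜) | IsCompactOperator S})
      (half_pos hε))
  obtain ⟨n, hn⟩ := IsCompactOperator.exists_tailNorm_apply_le hS (half_pos hε)
  refine ⟨n, fun j => ?_⟩
  have hcol := norm_apply_single_le_opNorm (T - S) j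
  rw [dist_eq_norm] at hTS
  rw [sub_apply] at hcol
  linarith [tailNorm_le_add_norm_sub (T (lp.single 1 j 1)) (S (lp.single 1 j 1)) n,
    hn (lp.single 1 j 1) (by simp [lp.norm_single])]

theorem exists_isCompactOperator_norm_le_norm_sub_le (T : ℓ¹(ℕ, 𝕜) →L[𝕜] ℓ¹(ℕ, 𝕜)) {r : ℝ}
    (hr : 0 ≤ r) : ∃ K : ℓ¹(ℕ, 𝕜) →L[𝕜] ℓ¹(ℕ, 𝕜), IsCompactOperator K ∧ ‖K‖ ≤ r ∧
      ‖T - K‖ ≤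
        max (‖T‖ - r) (infDist T {S : ℓ¹(ℕ, 𝕜) →L[𝕜] ℓ¹(ℕ, 𝕜) | IsCompactOperator S}) := by
  set D := infDist T {S : ℓ¹(ℕ, 𝕜) →L[𝕜] ℓ¹(ℕ, 𝕜) | IsCompactOperator S}
  set c := fun j => T (lp.single 1 j 1)
  set t := fun j => max D (‖c j‖ - r)
  have ht : ∀ j, 0 ≤ t j := fun j => infDist_nonneg.trans (le_max_left _ _)
  set k := fun j => tailCut (c j) (t j)
  have hk : ∀ j, ‖k j‖ ≤ r := fun j => by
    rw [norm_tailCut _ (ht j), tailExcess, tailNorm_zero]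
    exact max_le (by linarith [le_max_right D (‖c j‖ - r)]) hr
  refine ⟨ofColumns k hk, ?_, norm_ofColumns_le hk, ?_⟩
  · refine isCompactOperator_of_forall_tailNorm_apply_single_le _ fun ε hε => ?_
    obtain ⟨n, hn⟩ := exists_tailNorm_apply_single_lt_infDist_add T hε
    refine ⟨n, fun j => ?_⟩
    rw [ofColumns_apply_single, tailNorm_tailCut _ (ht j)]
    exact max_le (by linarith [hn j, le_max_left D (‖c j‖ - r)]) hε.le
  · refine opNorm_le_of_forall_norm_apply_single_le _ (infDist_nonneg.trans (le_max_right _ _))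
      fun j => ?_
    rw [sub_apply, ofColumns_apply_single]
    refine (norm_sub_tailCut_le _ (ht j)).trans (max_le (le_max_right _ _) ?_)
    linarith [norm_apply_single_le_opNorm T j, le_max_left (‖T‖ - r) D]

end BallProximinal

/-- `K(ℓ₁)` is ball proximinal in `B(ℓ₁)`: every bounded operator `T` on `ℓ₁` has a best
approximation from the closed unit ball of the compact operators, and
`d(T, B_{K(ℓ₁)}) = max (‖T‖ - 1) (d(T, K(ℓ₁)))`. -/
theorem stmt_14 (T : lp (fun _ : ℕ => ℂ) 1 →L[ℂ] lp (fun _ : ℕ => ℂ) 1) :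
    (∃ K : lp (fun _ : ℕ => ℂ) 1 →L[ℂ] lp (fun _ : ℕ => ℂ) 1,
      IsCompactOperator ⇑K ∧ ‖K‖ ≤ 1 ∧
      ‖T - K‖ = Metric.infDist T
        {K' : lp (fun _ : ℕ => ℂ) 1 →L[ℂ] lp (fun _ : ℕ => ℂ) 1 |
          IsCompactOperator ⇑K' ∧ ‖K'‖ ≤ 1}) ∧
    Metric.infDist T
        {K' : lp (fun _ : ℕ => ℂ) 1 →L[ℂ] lp (fun _ : ℕ => ℂ) 1 |
          IsCompactOperator ⇑K' ∧ ‖K'‖ ≤ 1}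
      = max (‖T‖ - 1)
          (Metric.infDist T
            {K' : lp (fun _ : ℕ => ℂ) 1 →L[ℂ] lp (fun _ : ℕ => ℂ) 1 |
              IsCompactOperator ⇑K'}) := by
  obtain ⟨K, hK, hK1, hTK⟩ := exists_isCompactOperator_norm_le_norm_sub_le T zero_le_one
  have hK_best := infDist_sep_norm_le_eq_max
    (s := {K' : ℓ¹(ℕ, ℂ) →L[ℂ] ℓ¹(ℕ, ℂ) | IsCompactOperator ⇑K'}) hK hK1 hTK
  exact ⟨⟨K, hK, hK1, hK_best.1⟩, hK_best.2⟩
end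

section
/- Let H be an infinite-dimensional complex Hilbert space and let T be a bounded linear operator on H with ‖T‖ > 1 that does not attain its norm, i.e. ‖Tx‖ < ‖T‖ for every unit vector x ∈ H. Then d(T, B_{K(H)}) = ‖T‖; in particular, 0 is a best approximation to T from the closed unit ball of K(H). -/
/-!
If `‖T - K‖ < ‖T‖` for a compact `K`, then `T` attains its norm. Take unit vectors `xₙ` with
`‖T xₙ‖ → ‖T‖` and a weak limit `x₀` of them along an ultrafilter (closed balls of a Hilbert space
are weakly compact, by Riesz and Banach–Alaoglu). For `yₙ = xₙ - x₀`, weak convergence gives the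
asymptotic Pythagorean splittings `‖xₙ‖² ≈ ‖x₀‖² + ‖yₙ‖²` and `‖T xₙ‖² ≈ ‖T x₀‖² + ‖T yₙ‖²`,
while compactness gives `K yₙ → 0` in norm, so `‖T yₙ‖ ≤ ‖T - K‖ ‖yₙ‖ + o(1)`. In the limit
`‖T‖² - ‖T x₀‖² ≤ ‖T - K‖² (1 - ‖x₀‖²)`, which with `‖T x₀‖ ≤ ‖T‖ ‖x₀‖` forces `‖x₀‖ = 1` and
`‖T x₀‖ = ‖T‖`. Hence a non-norm-attaining `T` is at distance at least `‖T‖ = ‖T - 0‖` from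
every compact operator.
-/

open Metric Filter Topology

section

variable {𝕜 : Type*} [RCLike 𝕜] {ι : Type*}

section NormedSpace

variable {E F : Type*} [NormedAddCommGroup E] [NormedSpace 𝕜 E]
  [NormedAddCommGroup F] [NormedSpace 𝕜 F]

theorem ContinuousLinearMap.exists_seq_norm_eq_one_tendsto_norm_apply [Nontrivial E]
    (f : E →L[𝕜] F) :
    ∃ x : ℕ → E, (∀ n, ‖x n‖ = 1) ∧ Tendsto (fun n => ‖f (x n)‖) atTop (𝓝 ‖f‖) := by
  obtain ⟨u, -, hu, hmem⟩ := exists_seq_tendsto_sSup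
    ((Set.nonempty_coe_sort.1 (NormedSpace.sphere_nonempty_rclike 𝕜 zero_le_one)).image
      fun x => ‖f x‖)
    ⟨‖f‖, by
      rintro - ⟨x, hx, rfl⟩
      simpa [mem_sphere_zero_iff_norm.1 hx] using f.le_opNorm x⟩
  choose x hx hfx using hmem
  refine ⟨x, fun n => mem_sphere_zero_iff_norm.1 (hx n), ?_⟩
  simpa only [hfx, f.sSup_sphere_eq_norm] using hu

theorem WeakSpace.tendsto_apply {l : Filter ι} {x : ι → E} {x₀ : E}
    (hx : Tendsto (fun i => toWeakSpace 𝕜 E (x i)) l (𝓝 (toWeakSpace 𝕜 E x₀)))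
    (f : StrongDual 𝕜 E) : Tendsto (fun i => f (x i)) l (𝓝 (f x₀)) :=
  ((WeakBilin.eval_continuous _ f).tendsto _).comp hx

theorem WeakSpace.tendsto_map {l : Filter ι} {x : ι → E} {x₀ : E}
    (hx : Tendsto (fun i => toWeakSpace 𝕜 E (x i)) l (𝓝 (toWeakSpace 𝕜 E x₀)))
    (A : E →L[𝕜] F) :
    Tendsto (fun i => toWeakSpace 𝕜 F (A (x i))) l (𝓝 (toWeakSpace 𝕜 F (A x₀))) :=
  ((WeakSpace.map A).continuous.tendsto _).comp hx

theorem IsCompactOperator.tendsto_of_tendsto_toWeakSpace {K : E →L[𝕜] F}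
    (hK : IsCompactOperator K) {𝒰 : Ultrafilter ι} {x : ι → E} {x₀ : E} {r : ℝ}
    (hr : ∀ i, ‖x i‖ ≤ r)
    (hx : Tendsto (fun i => toWeakSpace 𝕜 E (x i)) 𝒰 (𝓝 (toWeakSpace 𝕜 E x₀))) :
    Tendsto (fun i => K (x i)) 𝒰 (𝓝 (K x₀)) := by
  obtain ⟨C, hC, hKC⟩ := IsCompactOperator.image_closedBall_subset_compact
    (f := (K : E →ₗ[𝕜] F)) hK r
  obtain ⟨y, -, hy⟩ := hC.ultrafilter_le_nhds (𝒰.map fun i => K (x i)) <|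
    tendsto_principal.2 <| .of_forall fun i => hKC ⟨x i, mem_closedBall_zero_iff.2 (hr i), rfl⟩
  have hweak : toWeakSpace 𝕜 F y = toWeakSpace 𝕜 F (K x₀) :=
    tendsto_nhds_unique (((toWeakSpaceCLM 𝕜 F).continuous.tendsto y).comp hy)
      (WeakSpace.tendsto_map hx K)
  rwa [(toWeakSpace 𝕜 F).injective hweak] at hy

end NormedSpace

section InnerProductSpace

variable {H F : Type*} [NormedAddCommGroup H] [InnerProductSpace 𝕜 H]
  [NormedAddCommGroup F] [InnerProductSpace 𝕜 F]

theorem tendsto_norm_sq_sub_norm_sub_sq {l : Filter ι} {x : ι → H} {x₀ : H}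
    (hx : Tendsto (fun i => toWeakSpace 𝕜 H (x i)) l (𝓝 (toWeakSpace 𝕜 H x₀))) :
    Tendsto (fun i => ‖x i‖ ^ 2 - ‖x i - x₀‖ ^ 2) l (𝓝 (‖x₀‖ ^ 2)) := by
  have h := ((RCLike.continuous_re.tendsto _).comp
    (WeakSpace.tendsto_apply hx (innerSL 𝕜 x₀))).const_mul 2 |>.sub_const (‖x₀‖ ^ 2)
  convert h using 2 with i
  · simp only [norm_sub_sq (𝕜 := 𝕜), inner_re_symm (𝕜 := 𝕜) (x i), Function.comp_apply,
      coe_innerSL_apply]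
    ring
  · simp only [coe_innerSL_apply, inner_self_eq_norm_sq_to_K, RCLike.re_ofReal_pow]
    ring

theorem ContinuousLinearMap.norm_sq_sub_norm_apply_sq_le_of_tendsto {T K : H →L[𝕜] F}
    (hK : IsCompactOperator K) {𝒰 : Ultrafilter ι} {x : ι → H} {x₀ : H}
    (hx1 : ∀ i, ‖x i‖ = 1)
    (hw : Tendsto (fun i => toWeakSpace 𝕜 H (x i)) 𝒰 (𝓝 (toWeakSpace 𝕜 H x₀)))
    (hTx : Tendsto (fun i => ‖T (x i)‖) 𝒰 (𝓝 ‖T‖)) :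
    ‖T‖ ^ 2 - ‖T x₀‖ ^ 2 ≤ ‖T - K‖ ^ 2 * (1 - ‖x₀‖ ^ 2) := by
  have hy : Tendsto (fun i => ‖x i - x₀‖ ^ 2) 𝒰 (𝓝 (1 - ‖x₀‖ ^ 2)) := by
    refine (tendsto_const_nhds.sub (tendsto_norm_sq_sub_norm_sub_sq hw)).congr fun i => ?_
    simp [hx1 i]
  have hTy : Tendsto (fun i => ‖T (x i - x₀)‖ ^ 2) 𝒰 (𝓝 (‖T‖ ^ 2 - ‖T x₀‖ ^ 2)) := by
    refine ((hTx.pow 2).sub (tendsto_norm_sq_sub_norm_sub_sq (WeakSpace.tendsto_map hw T))).congr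
      fun i => ?_
    simp [map_sub]
  have hKy : Tendsto (fun i => ‖K (x i - x₀)‖) 𝒰 (𝓝 0) := by
    simpa [map_sub] using
      ((hK.tendsto_of_tendsto_toWeakSpace (fun i => (hx1 i).le) hw).sub_const (K x₀)).norm
  have hb : 0 ≤ 1 - ‖x₀‖ ^ 2 := ge_of_tendsto' hy fun i => sq_nonneg _
  have hbound : ∀ v, ‖T v‖ ≤ ‖T - K‖ * ‖v‖ + ‖K v‖ := fun v =>
    calc ‖T v‖ = ‖(T - K) v + K v‖ := by simp
      _ ≤ ‖T - K‖ * ‖v‖ + ‖K v‖ := (norm_add_le _ _).trans (by gcongr; exact le_opNorm _ _)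
  have hlim : Tendsto (fun i => (‖T - K‖ * ‖x i - x₀‖ + ‖K (x i - x₀)‖) ^ 2) 𝒰
      (𝓝 ((‖T - K‖ * √(1 - ‖x₀‖ ^ 2) + 0) ^ 2)) := by
    have := hy.sqrt
    simp only [Real.sqrt_sq (norm_nonneg _)] at this
    exact ((this.const_mul _).add hKy).pow 2
  rw [add_zero, mul_pow, Real.sq_sqrt hb] at hlim
  exact le_of_tendsto_of_tendsto' hTy hlim fun i => pow_le_pow_left₀ (norm_nonneg _) (hbound _) 2

variable [CompleteSpace H]

theorem InnerProductSpace.isCompact_toWeakSpace_closedBall (r : ℝ) :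
    IsCompact (toWeakSpace 𝕜 H '' closedBall 0 r) := by
  let Φ : WeakDual 𝕜 H → WeakSpace 𝕜 H := fun f =>
    toWeakSpace 𝕜 H ((toDual 𝕜 H).symm (WeakDual.toStrongDual f))
  have hΦ : Continuous Φ := by
    refine WeakBilin.continuous_of_continuous_eval _ fun g => ?_
    have hg : ∀ f : WeakDual 𝕜 H, g (Φ f) = starRingEnd 𝕜 (f ((toDual 𝕜 H).symm g)) := by
      intro f
      change g ((toDual 𝕜 H).symm (WeakDual.toStrongDual f)) = _
      rw [← toDual_symm_apply (y := g), ← inner_conj_symm]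
      exact congrArg _ toDual_symm_apply
    show Continuous fun f => g (Φ f)
    simp_rw [hg]
    exact RCLike.continuous_conj.comp (WeakDual.eval_continuous _)
  convert (WeakDual.isCompact_closedBall (𝕜 := 𝕜) (E := H) 0 r).image hΦ using 1
  ext x
  simp only [Set.mem_image, mem_closedBall_zero_iff, Set.mem_preimage, Φ]
  constructor
  · rintro ⟨y, hy, rfl⟩
    exact ⟨StrongDual.toWeakDual (toDual 𝕜 H y), by simpa, by simp⟩
  · rintro ⟨f, hf, rfl⟩
    exact ⟨_, by simpa using hf, rfl⟩

theorem ContinuousLinearMap.exists_norm_eq_one_norm_apply_eq_of_norm_sub_lt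
    {T K : H →L[𝕜] F} (hK : IsCompactOperator K) (h : ‖T - K‖ < ‖T‖) :
    ∃ x : H, ‖x‖ = 1 ∧ ‖T x‖ = ‖T‖ := by
  have : Nontrivial H := by
    by_contra hH
    rw [not_nontrivial_iff_subsingleton] at hH
    simp [opNorm_subsingleton] at h
  obtain ⟨x, hx1, hTx⟩ := T.exists_seq_norm_eq_one_tendsto_norm_apply
  let 𝒰 := Ultrafilter.of (atTop : Filter ℕ)
  obtain ⟨-, ⟨x₀, hx₀le, rfl⟩, hw⟩ :=
    (InnerProductSpace.isCompact_toWeakSpace_closedBall (𝕜 := 𝕜) (H := H) 1).ultrafilter_le_nhds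
      (𝒰.map fun n => toWeakSpace 𝕜 H (x n)) <| tendsto_principal.2 <|
        .of_forall fun n => ⟨x n, mem_closedBall_zero_iff.2 (hx1 n).le, rfl⟩
  have hab := T.norm_sq_sub_norm_apply_sq_le_of_tendsto hK hx1 hw
    (hTx.mono_left (Ultrafilter.of_le atTop))
  rw [mem_closedBall_zero_iff] at hx₀le
  have hTx₀ : ‖T x₀‖ ≤ ‖T‖ * ‖x₀‖ := T.le_opNorm x₀
  have hx₀ : ‖x₀‖ = 1 := by
    have hT2 : ‖T - K‖ ^ 2 < ‖T‖ ^ 2 := pow_lt_pow_left₀ h (norm_nonneg _) two_ne_zero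
    have hTx₀2 : ‖T x₀‖ ^ 2 ≤ ‖T‖ ^ 2 * ‖x₀‖ ^ 2 := by
      rw [← mul_pow]; exact pow_le_pow_left₀ (norm_nonneg _) hTx₀ 2
    have hx₀2 : ‖x₀‖ ^ 2 ≤ 1 := pow_le_one₀ (norm_nonneg _) hx₀le
    have : ‖x₀‖ ^ 2 = 1 := by nlinarith
    exact (pow_eq_one_iff_of_nonneg (norm_nonneg _) two_ne_zero).1 this
  refine ⟨x₀, hx₀, le_antisymm (by simpa [hx₀] using hTx₀) ?_⟩
  rw [hx₀] at hab
  exact (pow_le_pow_iff_left₀ (norm_nonneg _) (norm_nonneg _) two_ne_zero).1 (by linarith)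

theorem ContinuousLinearMap.norm_le_norm_sub_of_isCompactOperator {T K : H →L[𝕜] F}
    (hT : ∀ x : H, ‖x‖ = 1 → ‖T x‖ < ‖T‖) (hK : IsCompactOperator K) : ‖T‖ ≤ ‖T - K‖ := by
  by_contra! h
  obtain ⟨x, hx, hTx⟩ := exists_norm_eq_one_norm_apply_eq_of_norm_sub_lt hK h
  exact (hT x hx).ne hTx

end InnerProductSpace

end

theorem stmt_15_general {H : Type*} [NormedAddCommGroup H] [InnerProductSpace ℂ H] [CompleteSpace H]
    (T : H →L[ℂ] H)
    (hna : ∀ x : H, ‖x‖ = 1 → ‖T x‖ < ‖T‖) :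
    Metric.infDist T {K : H →L[ℂ] H | IsCompactOperator ⇑K ∧ ‖K‖ ≤ 1} = ‖T‖ ∧
    ‖T - (0 : H →L[ℂ] H)‖
      = Metric.infDist T {K : H →L[ℂ] H | IsCompactOperator ⇑K ∧ ‖K‖ ≤ 1} := by
  have h0 : (0 : H →L[ℂ] H) ∈ {K : H →L[ℂ] H | IsCompactOperator ⇑K ∧ ‖K‖ ≤ 1} :=
    ⟨isCompactOperator_zero, by simp⟩
  have hdist : infDist T {K : H →L[ℂ] H | IsCompactOperator ⇑K ∧ ‖K‖ ≤ 1} = ‖T‖ := by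
    refine le_antisymm (by simpa using infDist_le_dist_of_mem (x := T) h0) ?_
    refine (le_infDist ⟨0, h0⟩).2 fun K hK => ?_
    rw [dist_eq_norm]
    exact T.norm_le_norm_sub_of_isCompactOperator hna hK.1
  exact ⟨hdist, by rw [sub_zero, hdist]⟩

/-- If `T` is a bounded operator on an infinite-dimensional complex Hilbert space with
`‖T‖ > 1` which does not attain its norm, then `d(T, B_{K(H)}) = ‖T‖`; in particular `0` is a
best approximation to `T` from the closed unit ball of `K(H)`. -/
theorem stmt_15 {H : Type*} [NormedAddCommGroup H] [InnerProductSpace ℂ H] [CompleteSpace H]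
    (hH : ¬ FiniteDimensional ℂ H) (T : H →L[ℂ] H) (hT : 1 < ‖T‖)
    (hna : ∀ x : H, ‖x‖ = 1 → ‖T x‖ < ‖T‖) :
    Metric.infDist T {K : H →L[ℂ] H | IsCompactOperator ⇑K ∧ ‖K‖ ≤ 1} = ‖T‖ ∧
    ‖T - (0 : H →L[ℂ] H)‖
      = Metric.infDist T {K : H →L[ℂ] H | IsCompactOperator ⇑K ∧ ‖K‖ ≤ 1} :=
  stmt_15_general T hna
end
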